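/- arXiv:1808.05486 — 7 statements merged into one kernel-verified Lean document; each statement's English description precedes it below -/
import Mathlib

section
/- Let s ∈ ℝ and let a, u_S : ℝ² × ℝ → ℝ² and m_T, b, c, θ_S, u_T : ℝ² × ℝ → ℝ be smooth, satisfying on ℝ² × ℝ: (i) ∂_t a + u_S·∇a + (∇u_S)ᵀa + m_T ∇u_T + b ∇θ_S − ∇c = 0; (ii) ∂_t m_T + u_S·∇m_T + s·b = 0; (iii) ∂_t θ_S + u_S·∇θ_S + s·u_T = 0. Then the vector field V := s·a − m_T ∇θ_S satisfies ∂_t V + u_S·∇V + (∇u_S)ᵀV = s·∇c on ℝ² × ℝ. -/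
/-- Partial derivative in time of a time-dependent field on the slice ℝ². -/
noncomputable def pt {α : Type*} [NormedAddCommGroup α] [NormedSpace ℝ α]
    (g : (ℝ × ℝ) → ℝ → α) (x : ℝ × ℝ) (t : ℝ) : α :=
  deriv (fun τ => g x τ) t

/-- Spatial directional derivative of a time-dependent field, in direction `v`. -/
noncomputable def dsp {α : Type*} [NormedAddCommGroup α] [NormedSpace ℝ α]
    (g : (ℝ × ℝ) → ℝ → α) (x : ℝ × ℝ) (t : ℝ) (v : ℝ × ℝ) : α :=
  fderiv ℝ (fun y => g y t) x v

/-- Unit vector in the x-direction. -/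
def ex : ℝ × ℝ := (1, 0)

/-- Unit vector in the z-direction. -/
def ez : ℝ × ℝ := (0, 1)

/-- Euclidean dot product on ℝ². -/
def dot (a b : ℝ × ℝ) : ℝ := a.1 * b.1 + a.2 * b.2

/-- Spatial gradient of a time-dependent scalar field. -/
noncomputable def grad (g : (ℝ × ℝ) → ℝ → ℝ) (x : ℝ × ℝ) (t : ℝ) : ℝ × ℝ :=
  (dsp g x t ex, dsp g x t ez)

/-- `(gradT u w)ᵢ = Σⱼ (∂ᵢ uⱼ) wⱼ`, i.e. `(∇u)ᵀ w`. -/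
noncomputable def gradT (u w : (ℝ × ℝ) → ℝ → ℝ × ℝ) (x : ℝ × ℝ) (t : ℝ) : ℝ × ℝ :=
  (dot (dsp u x t ex) (w x t), dot (dsp u x t ez) (w x t))

/-- Divergence `∂ₓ u₁ + ∂_z u₂` of a time-dependent vector field. -/
noncomputable def div2 (u : (ℝ × ℝ) → ℝ → ℝ × ℝ) (x : ℝ × ℝ) (t : ℝ) : ℝ :=
  dsp (fun y τ => (u y τ).1) x t ex + dsp (fun y τ => (u y τ).2) x t ez

/-- A time-dependent field is smooth (C^∞) jointly in space and time. -/
def Smooth2 {α : Type*} [NormedAddCommGroup α] [NormedSpace ℝ α]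
    (g : (ℝ × ℝ) → ℝ → α) : Prop :=
  ContDiff ℝ (⊤ : ℕ∞) (fun p : (ℝ × ℝ) × ℝ => g p.1 p.2)

section MyAux

variable {α : Type*} [NormedAddCommGroup α] [NormedSpace ℝ α]

noncomputable def unc (g : (ℝ × ℝ) → ℝ → α) : ((ℝ × ℝ) × ℝ) → α := fun p => g p.1 p.2

noncomputable def DS (g : (ℝ × ℝ) → ℝ → α) (q w : (ℝ × ℝ) × ℝ) : α :=
  fderiv ℝ (unc g) q w

lemma Smooth2.diffAt {g : (ℝ × ℝ) → ℝ → α} (hg : Smooth2 g) (p : (ℝ × ℝ) × ℝ) :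
    DifferentiableAt ℝ (unc g) p := (hg.differentiable (by simp)).differentiableAt

lemma pt_eq' {g : (ℝ × ℝ) → ℝ → α} {L : ((ℝ × ℝ) × ℝ) →L[ℝ] α} {x : ℝ × ℝ} {t : ℝ}
    (h : HasFDerivAt (unc g) L (x, t)) : pt g x t = L (0, 1) := by
  have h1 : HasDerivAt (fun τ : ℝ => ((x, τ) : (ℝ × ℝ) × ℝ)) ((0 : ℝ × ℝ), (1 : ℝ)) t :=
    (hasDerivAt_const t x).prodMk (hasDerivAt_id t)
  exact (h.comp_hasDerivAt t h1).deriv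

lemma dsp_eq' {g : (ℝ × ℝ) → ℝ → α} {L : ((ℝ × ℝ) × ℝ) →L[ℝ] α} {x : ℝ × ℝ} {t : ℝ}
    (h : HasFDerivAt (unc g) L (x, t)) (v : ℝ × ℝ) : dsp g x t v = L (v, 0) := by
  have h1 : HasFDerivAt (fun y : ℝ × ℝ => ((y, t) : (ℝ × ℝ) × ℝ))
      ((ContinuousLinearMap.id ℝ (ℝ × ℝ)).prod 0) x :=
    (hasFDerivAt_id x).prodMk (hasFDerivAt_const t x)
  have h2 : HasFDerivAt (fun y : ℝ × ℝ => g y t)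
      (L.comp ((ContinuousLinearMap.id ℝ (ℝ × ℝ)).prod 0)) x := by have := h.comp x h1; exact this
  show fderiv ℝ (fun y => g y t) x v = _
  rw [h2.fderiv]
  simp

lemma pt_eq {g : (ℝ × ℝ) → ℝ → α} (hg : Smooth2 g) (x : ℝ × ℝ) (t : ℝ) :
    pt g x t = DS g (x, t) (0, 1) := pt_eq' (hg.diffAt (x, t)).hasFDerivAt

lemma dsp_eq {g : (ℝ × ℝ) → ℝ → α} (hg : Smooth2 g) (x : ℝ × ℝ) (t : ℝ) (v : ℝ × ℝ) :
    dsp g x t v = DS g (x, t) (v, 0) := dsp_eq' (hg.diffAt (x, t)).hasFDerivAt v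

lemma smooth_DS {g : (ℝ × ℝ) → ℝ → α} (hg : Smooth2 g) (w : (ℝ × ℝ) × ℝ) :
    ContDiff ℝ (⊤ : ℕ∞) (fun q : (ℝ × ℝ) × ℝ => DS g q w) :=
  (ContinuousLinearMap.apply ℝ α w).contDiff.comp
    ((hg : ContDiff ℝ (⊤ : ℕ∞) (unc g)).fderiv_right (by simp))

lemma fderiv_DS {g : (ℝ × ℝ) → ℝ → α} (hg : Smooth2 g) (p w : (ℝ × ℝ) × ℝ) :
    fderiv ℝ (fun q => DS g q w) p
      = (ContinuousLinearMap.apply ℝ α w).comp (fderiv ℝ (fderiv ℝ (unc g)) p) := by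
  have hd : DifferentiableAt ℝ (fderiv ℝ (unc g)) p :=
    ((((hg : ContDiff ℝ (⊤ : ℕ∞) (unc g)).fderiv_right (m := (⊤ : ℕ∞)) (by simp))).differentiable (by simp)).differentiableAt
  exact ((ContinuousLinearMap.apply ℝ α w).hasFDerivAt.comp p hd.hasFDerivAt).fderiv

lemma sym_DS {g : (ℝ × ℝ) → ℝ → α} (hg : Smooth2 g) (p v w : (ℝ × ℝ) × ℝ) :
    fderiv ℝ (fun q => DS g q v) p w = fderiv ℝ (fun q => DS g q w) p v := by
  rw [fderiv_DS hg, fderiv_DS hg]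
  exact ((hg : ContDiff ℝ (⊤ : ℕ∞) (unc g)).contDiffAt.isSymmSndFDerivAt (by rw [minSmoothness_of_isRCLikeNormedField]; exact WithTop.coe_le_coe.2 le_top)).eq w v

lemma DS_dir {g : (ℝ × ℝ) → ℝ → α} (q : (ℝ × ℝ) × ℝ) (v : ℝ × ℝ) :
    DS g q (v, 0) = v.1 • DS g q (ex, 0) + v.2 • DS g q (ez, 0) := by
  have hv : ((v, 0) : (ℝ × ℝ) × ℝ) = v.1 • ((ex, 0) : (ℝ × ℝ) × ℝ) + v.2 • (ez, 0) := by
    simp [ex, ez, Prod.ext_iff]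
  rw [DS, hv, map_add, (fderiv ℝ (unc g) q).map_smul, (fderiv ℝ (unc g) q).map_smul]
  rfl

lemma apply_dir (L : ((ℝ × ℝ) × ℝ) →L[ℝ] α) (v : ℝ × ℝ) :
    L (v, 0) = v.1 • L (ex, 0) + v.2 • L (ez, 0) := by
  have hv : ((v, 0) : (ℝ × ℝ) × ℝ) = v.1 • ((ex, 0) : (ℝ × ℝ) × ℝ) + v.2 • (ez, 0) := by
    simp [ex, ez, Prod.ext_iff]
  rw [hv, map_add, L.map_smul, L.map_smul]

end MyAux

/-- From the slice Euler–Poincaré equations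
(i)  `∂_t a + u_S·∇a + (∇u_S)ᵀa + m_T ∇u_T + b ∇θ_S − ∇c = 0`,
(ii) `∂_t m_T + u_S·∇m_T + s·b = 0`,
(iii) `∂_t θ_S + u_S·∇θ_S + s·u_T = 0`,
the vector field `V = s·a − m_T ∇θ_S` satisfies
`∂_t V + u_S·∇V + (∇u_S)ᵀV = s·∇c`. -/
theorem slice_vorticity_one_form
    (s : ℝ) (a uS : (ℝ × ℝ) → ℝ → ℝ × ℝ)
    (mT b c θS uT : (ℝ × ℝ) → ℝ → ℝ)
    (ha : Smooth2 a) (huS : Smooth2 uS) (hmT : Smooth2 mT) (hb : Smooth2 b)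
    (hc : Smooth2 c) (hθS : Smooth2 θS) (huT : Smooth2 uT)
    (hi : ∀ x t, pt a x t + dsp a x t (uS x t) + gradT uS a x t
      + mT x t • grad uT x t + b x t • grad θS x t - grad c x t = 0)
    (hii : ∀ x t, pt mT x t + dsp mT x t (uS x t) + s * b x t = 0)
    (hiii : ∀ x t, pt θS x t + dsp θS x t (uS x t) + s * uT x t = 0) :
    ∀ (x : ℝ × ℝ) (t : ℝ),
      pt (fun y τ => s • a y τ - mT y τ • grad θS y τ) x t
        + dsp (fun y τ => s • a y τ - mT y τ • grad θS y τ) x t (uS x t)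
        + gradT uS (fun y τ => s • a y τ - mT y τ • grad θS y τ) x t
        = s • grad c x t := by
  intro x t
  -- rewrite grad θS inside V
  have hVrw : (fun y τ => s • a y τ - mT y τ • grad θS y τ)
      = fun (y : ℝ × ℝ) (τ : ℝ) =>
          s • a y τ - mT y τ • (DS θS (y, τ) (ex, 0), DS θS (y, τ) (ez, 0)) := by
    funext y τ
    rw [grad, dsp_eq hθS, dsp_eq hθS]
  rw [hVrw]
  -- derivative of V
  have hf1 : ContDiff ℝ (⊤ : ℕ∞) (fun q : (ℝ × ℝ) × ℝ => DS θS q (ex, 0)) := smooth_DS hθS _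
  have hf2 : ContDiff ℝ (⊤ : ℕ∞) (fun q : (ℝ × ℝ) × ℝ => DS θS q (ez, 0)) := smooth_DS hθS _
  have hd1 : HasFDerivAt (fun q : (ℝ × ℝ) × ℝ => DS θS q (ex, 0))
      (fderiv ℝ (fun q : (ℝ × ℝ) × ℝ => DS θS q (ex, 0)) (x, t)) (x, t) :=
    ((hf1.differentiable (by simp)) _).hasFDerivAt
  have hd2 : HasFDerivAt (fun q : (ℝ × ℝ) × ℝ => DS θS q (ez, 0))
      (fderiv ℝ (fun q : (ℝ × ℝ) × ℝ => DS θS q (ez, 0)) (x, t)) (x, t) :=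
    ((hf2.differentiable (by simp)) _).hasFDerivAt
  have hVd : HasFDerivAt
      (unc (fun (y : ℝ × ℝ) (τ : ℝ) =>
          s • a y τ - mT y τ • (DS θS (y, τ) (ex, 0), DS θS (y, τ) (ez, 0))))
      (s • fderiv ℝ (unc a) (x, t)
        - (mT x t • ((fderiv ℝ (fun q : (ℝ × ℝ) × ℝ => DS θS q (ex, 0)) (x, t)).prod
              (fderiv ℝ (fun q : (ℝ × ℝ) × ℝ => DS θS q (ez, 0)) (x, t)))
          + (fderiv ℝ (unc mT) (x, t)).smulRight
              (DS θS (x, t) (ex, 0), DS θS (x, t) (ez, 0))))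
      (x, t) :=
    HasFDerivAt.sub (((ha.diffAt (x, t)).hasFDerivAt).const_smul s)
      (((hmT.diffAt (x, t)).hasFDerivAt).smul (hd1.prodMk hd2))
  rw [pt_eq' hVd, dsp_eq' hVd]
  -- hypotheses at (x, t)
  have hi' := hi x t
  simp only [gradT, grad, dot] at hi'
  rw [pt_eq ha, dsp_eq ha, dsp_eq huS, dsp_eq huS, dsp_eq huT, dsp_eq huT,
    dsp_eq hθS, dsp_eq hθS, dsp_eq hc, dsp_eq hc] at hi'
  have hii' := hii x t
  rw [pt_eq hmT, dsp_eq hmT] at hii'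
  -- equation (iii) as a vanishing function
  have hΦ : (fun q : (ℝ × ℝ) × ℝ => DS θS q (0, 1)
      + ((uS q.1 q.2).1 * DS θS q (ex, 0) + (uS q.1 q.2).2 * DS θS q (ez, 0))
      + s * uT q.1 q.2) = fun _ => (0 : ℝ) := by
    funext q
    have h3 := hiii q.1 q.2
    rw [pt_eq hθS, dsp_eq hθS, DS_dir] at h3
    simpa using h3
  -- derivative of Φ
  have hdT : HasFDerivAt (fun q : (ℝ × ℝ) × ℝ => DS θS q (0, 1))
      (fderiv ℝ (fun q : (ℝ × ℝ) × ℝ => DS θS q (0, 1)) (x, t)) (x, t) :=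
    (((smooth_DS hθS ((0 : ℝ × ℝ), (1 : ℝ))).differentiable (by simp)) _).hasFDerivAt
  have hu : HasFDerivAt (unc uS) (fderiv ℝ (unc uS) (x, t)) (x, t) :=
    (huS.diffAt (x, t)).hasFDerivAt
  have hu1 : HasFDerivAt (fun q : (ℝ × ℝ) × ℝ => (uS q.1 q.2).1)
      ((ContinuousLinearMap.fst ℝ ℝ ℝ).comp (fderiv ℝ (unc uS) (x, t))) (x, t) := hu.fst
  have hu2 : HasFDerivAt (fun q : (ℝ × ℝ) × ℝ => (uS q.1 q.2).2)
      ((ContinuousLinearMap.snd ℝ ℝ ℝ).comp (fderiv ℝ (unc uS) (x, t))) (x, t) := hu.snd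
  have hut : HasFDerivAt (fun q : (ℝ × ℝ) × ℝ => uT q.1 q.2)
      (fderiv ℝ (unc uT) (x, t)) (x, t) := (huT.diffAt (x, t)).hasFDerivAt
  have hΦd : HasFDerivAt (fun q : (ℝ × ℝ) × ℝ => DS θS q (0, 1)
      + ((uS q.1 q.2).1 * DS θS q (ex, 0) + (uS q.1 q.2).2 * DS θS q (ez, 0))
      + s * uT q.1 q.2)
      ((fderiv ℝ (fun q : (ℝ × ℝ) × ℝ => DS θS q (0, 1)) (x, t)
        + (((uS x t).1 • fderiv ℝ (fun q : (ℝ × ℝ) × ℝ => DS θS q (ex, 0)) (x, t)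
            + DS θS (x, t) (ex, 0) • ((ContinuousLinearMap.fst ℝ ℝ ℝ).comp
                (fderiv ℝ (unc uS) (x, t))))
          + ((uS x t).2 • fderiv ℝ (fun q : (ℝ × ℝ) × ℝ => DS θS q (ez, 0)) (x, t)
            + DS θS (x, t) (ez, 0) • ((ContinuousLinearMap.snd ℝ ℝ ℝ).comp
                (fderiv ℝ (unc uS) (x, t))))))
        + s • fderiv ℝ (unc uT) (x, t)) (x, t) :=
    (hdT.add ((hu1.mul hd1).add (hu2.mul hd2))).add (hut.const_mul s)
  have h0 : (fderiv ℝ (fun q : (ℝ × ℝ) × ℝ => DS θS q (0, 1)) (x, t)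
        + (((uS x t).1 • fderiv ℝ (fun q : (ℝ × ℝ) × ℝ => DS θS q (ex, 0)) (x, t)
            + DS θS (x, t) (ex, 0) • ((ContinuousLinearMap.fst ℝ ℝ ℝ).comp
                (fderiv ℝ (unc uS) (x, t))))
          + ((uS x t).2 • fderiv ℝ (fun q : (ℝ × ℝ) × ℝ => DS θS q (ez, 0)) (x, t)
            + DS θS (x, t) (ez, 0) • ((ContinuousLinearMap.snd ℝ ℝ ℝ).comp
                (fderiv ℝ (unc uS) (x, t))))))
        + s • fderiv ℝ (unc uT) (x, t) = 0 := by
    rw [← hΦd.fderiv, hΦ]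
    exact fderiv_const_apply 0
  have hΦX := congrArg (fun L : ((ℝ × ℝ) × ℝ) →L[ℝ] ℝ => L (ex, (0 : ℝ))) h0
  have hΦZ := congrArg (fun L : ((ℝ × ℝ) × ℝ) →L[ℝ] ℝ => L (ez, (0 : ℝ))) h0
  simp only [ContinuousLinearMap.add_apply, ContinuousLinearMap.coe_smul', Pi.smul_apply,
    ContinuousLinearMap.smulRight_apply, ContinuousLinearMap.comp_apply,
    ContinuousLinearMap.coe_fst', ContinuousLinearMap.coe_snd', smul_eq_mul,
    ContinuousLinearMap.zero_apply] at hΦX hΦZ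
  -- symmetry of second derivatives
  rw [sym_DS hθS (x, t) ((0 : ℝ × ℝ), (1 : ℝ)) (ex, 0),
    sym_DS hθS (x, t) (ez, 0) (ex, 0)] at hΦX
  rw [sym_DS hθS (x, t) ((0 : ℝ × ℝ), (1 : ℝ)) (ez, 0),
    sym_DS hθS (x, t) (ex, 0) (ez, 0)] at hΦZ
  -- expand the goal
  simp only [gradT, grad, dot]
  rw [dsp_eq huS, dsp_eq huS, dsp_eq hc, dsp_eq hc]
  have e1 := apply_dir (fderiv ℝ (fun q : (ℝ × ℝ) × ℝ => DS θS q (ex, 0)) (x, t)) (uS x t)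
  have e2 := apply_dir (fderiv ℝ (fun q : (ℝ × ℝ) × ℝ => DS θS q (ez, 0)) (x, t)) (uS x t)
  simp only [ContinuousLinearMap.sub_apply, ContinuousLinearMap.add_apply,
    ContinuousLinearMap.coe_smul', Pi.smul_apply, ContinuousLinearMap.smulRight_apply,
    ContinuousLinearMap.prod_apply, smul_eq_mul]
  rw [e1, e2]
  rw [Prod.ext_iff] at hi'
  obtain ⟨hi1, hi2⟩ := hi'
  simp only [Prod.fst_add, Prod.snd_add, Prod.fst_sub, Prod.snd_sub, Prod.smul_fst,
    Prod.smul_snd, Prod.fst_zero, Prod.snd_zero, smul_eq_mul] at hi1 hi2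
  rw [Prod.ext_iff]
  simp only [Prod.fst_add, Prod.snd_add, Prod.fst_sub, Prod.snd_sub, Prod.smul_fst,
    Prod.smul_snd, smul_eq_mul]
  simp only [DS] at hi1 hi2 hii' hΦX hΦZ ⊢
  constructor
  · linear_combination s * hi1 - fderiv ℝ (unc θS) (x, t) (ex, 0) * hii' - mT x t * hΦX
  · linear_combination s * hi2 - fderiv ℝ (unc θS) (x, t) (ez, 0) * hii' - mT x t * hΦZ
end

section
/- Let u_S, V : ℝ² × ℝ → ℝ² and c : ℝ² × ℝ → ℝ be smooth with ∂_t V + u_S·∇V + (∇u_S)ᵀV = ∇c on ℝ² × ℝ. Let φ : ℝ² × ℝ → ℝ² be smooth with ∂_t φ(X,t) = u_S(φ(X,t),t) for all X, t, and let γ : ℝ → ℝ² be a smooth curve with γ(σ+1) = γ(σ) for all σ. Then the circulation t ↦ ∫₀¹ V(φ(γ(σ),t), t) · ∂_σ[φ(γ(σ),t)] dσ is constant in t. -/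
section aux
variable {α : Type*} [NormedAddCommGroup α] [NormedSpace ℝ α]

lemma hasDerivAt_slice1 (f : ℝ × ℝ → α) (hf : ContDiff ℝ (⊤ : ℕ∞) f) (s t : ℝ) :
    HasDerivAt (fun s' => f (s', t)) (fderiv ℝ f (s, t) (1, 0)) s := by
  have h1 : HasFDerivAt f (fderiv ℝ f (s, t)) (s, t) :=
    (hf.differentiable (by simp) (s, t)).hasFDerivAt
  have h2 : HasDerivAt (fun s' : ℝ => (s', t)) ((1 : ℝ), (0 : ℝ)) s :=
    (hasDerivAt_id s).prodMk (hasDerivAt_const s t)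
  exact h1.comp_hasDerivAt s h2

lemma hasDerivAt_slice2 (f : ℝ × ℝ → α) (hf : ContDiff ℝ (⊤ : ℕ∞) f) (s t : ℝ) :
    HasDerivAt (fun t' => f (s, t')) (fderiv ℝ f (s, t) (0, 1)) t := by
  have h1 : HasFDerivAt f (fderiv ℝ f (s, t)) (s, t) :=
    (hf.differentiable (by simp) (s, t)).hasFDerivAt
  have h2 : HasDerivAt (fun t' : ℝ => (s, t')) ((0 : ℝ), (1 : ℝ)) t :=
    (hasDerivAt_const t s).prodMk (hasDerivAt_id t)
  exact h1.comp_hasDerivAt t h2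

lemma contDiff_fderiv_apply (f : ℝ × ℝ → α) (hf : ContDiff ℝ (⊤ : ℕ∞) f) (v : ℝ × ℝ) :
    ContDiff ℝ (⊤ : ℕ∞) (fun p => fderiv ℝ f p v) :=
  (hf.fderiv_right (by simp)).clm_apply contDiff_const

lemma fderiv_swap (f : ℝ × ℝ → α) (hf : ContDiff ℝ (⊤ : ℕ∞) f) (p : ℝ × ℝ) (v w : ℝ × ℝ) :
    fderiv ℝ (fun q => fderiv ℝ f q v) p w = fderiv ℝ (fun q => fderiv ℝ f q w) p v := by
  have hd : ∀ y, HasFDerivAt f (fderiv ℝ f y) y :=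
    fun y => (hf.differentiable (by simp) y).hasFDerivAt
  have hf' : ContDiff ℝ (⊤ : ℕ∞) (fderiv ℝ f) := hf.fderiv_right (by simp)
  have h'' : HasFDerivAt (fderiv ℝ f) (fderiv ℝ (fderiv ℝ f) p) p :=
    (hf'.differentiable (by simp) p).hasFDerivAt
  have hsymm := second_derivative_symmetric hd h'' v w
  have e1 : HasFDerivAt (fun q => fderiv ℝ f q v)
      ((ContinuousLinearMap.apply ℝ α v).comp (fderiv ℝ (fderiv ℝ f) p)) p :=
    (ContinuousLinearMap.apply ℝ α v).hasFDerivAt.comp p h''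
  have e2 : HasFDerivAt (fun q => fderiv ℝ f q w)
      ((ContinuousLinearMap.apply ℝ α w).comp (fderiv ℝ (fderiv ℝ f) p)) p :=
    (ContinuousLinearMap.apply ℝ α w).hasFDerivAt.comp p h''
  rw [e1.fderiv, e2.fderiv]
  exact hsymm.symm ▸ hsymm

lemma fderiv_uncurry (g : (ℝ × ℝ) → ℝ → α) (hg : Smooth2 g) (x : ℝ × ℝ) (t : ℝ)
    (v : ℝ × ℝ) (s : ℝ) :
    fderiv ℝ (fun q : (ℝ × ℝ) × ℝ => g q.1 q.2) (x, t) (v, s)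
      = dsp g x t v + s • pt g x t := by
  set J : (ℝ × ℝ) × ℝ → α := fun q => g q.1 q.2 with hJ
  have hJd : HasFDerivAt J (fderiv ℝ J (x, t)) (x, t) :=
    (hg.differentiable (by simp) (x, t)).hasFDerivAt
  have h1 : dsp g x t v = fderiv ℝ J (x, t) (v, 0) := by
    have hin : HasFDerivAt (fun y : ℝ × ℝ => (y, t))
        ((ContinuousLinearMap.id ℝ (ℝ × ℝ)).prod 0) x :=
      (hasFDerivAt_id x).prodMk (hasFDerivAt_const t x)
    have := hJd.comp x hin
    have hder : fderiv ℝ (fun y => g y t) x = (fderiv ℝ J (x, t)).comp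
        ((ContinuousLinearMap.id ℝ (ℝ × ℝ)).prod 0) := this.fderiv
    simp [dsp, hder]
  have h2 : pt g x t = fderiv ℝ J (x, t) (0, 1) := by
    have hin : HasDerivAt (fun τ : ℝ => (x, τ)) (((0 : ℝ × ℝ)), (1 : ℝ)) t :=
      (hasDerivAt_const t x).prodMk (hasDerivAt_id t)
    have := hJd.comp_hasDerivAt t hin
    unfold pt; exact this.deriv
  have hvs : (v, s) = ((v, 0) : (ℝ × ℝ) × ℝ) + s • ((0 : ℝ × ℝ), (1 : ℝ)) := by
    simp [Prod.ext_iff]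
  rw [hvs, (fderiv ℝ J (x, t)).map_add, (fderiv ℝ J (x, t)).map_smul, h1, h2]

lemma contDiff_comp_flow (g : (ℝ × ℝ) → ℝ → α) (hg : Smooth2 g)
    (Φ : ℝ × ℝ → ℝ × ℝ) (hΦ : ContDiff ℝ (⊤ : ℕ∞) Φ) :
    ContDiff ℝ (⊤ : ℕ∞) (fun q : ℝ × ℝ => g (Φ q) q.2) :=
  hg.comp (hΦ.prodMk contDiff_snd)

lemma fderiv_comp_flow (g : (ℝ × ℝ) → ℝ → α) (hg : Smooth2 g)
    (Φ : ℝ × ℝ → ℝ × ℝ) (hΦ : ContDiff ℝ (⊤ : ℕ∞) Φ) (p : ℝ × ℝ) (v : ℝ × ℝ) :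
    fderiv ℝ (fun q => g (Φ q) q.2) p v
      = dsp g (Φ p) p.2 (fderiv ℝ Φ p v) + v.2 • pt g (Φ p) p.2 := by
  set J : (ℝ × ℝ) × ℝ → α := fun q => g q.1 q.2 with hJ
  have hJd : HasFDerivAt J (fderiv ℝ J (Φ p, p.2)) (Φ p, p.2) :=
    (hg.differentiable (by simp) (Φ p, p.2)).hasFDerivAt
  have hm : HasFDerivAt (fun q : ℝ × ℝ => (Φ q, q.2))
      ((fderiv ℝ Φ p).prod (ContinuousLinearMap.snd ℝ ℝ ℝ)) p :=
    ((hΦ.differentiable (by simp) p).hasFDerivAt).prodMk (hasFDerivAt_snd)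
  have hcomp : HasFDerivAt (fun q => g (Φ q) q.2)
      ((fderiv ℝ J (Φ p, p.2)).comp ((fderiv ℝ Φ p).prod (ContinuousLinearMap.snd ℝ ℝ ℝ))) p :=
    by have := hJd.comp p hm; exact this
  have : fderiv ℝ (fun q => g (Φ q) q.2) p v
      = fderiv ℝ J (Φ p, p.2) (fderiv ℝ Φ p v, v.2) := by
    rw [hcomp.fderiv]; rfl
  rw [this, fderiv_uncurry g hg (Φ p) p.2 (fderiv ℝ Φ p v) v.2]

end aux


section aux2
variable {α : Type*} [NormedAddCommGroup α] [NormedSpace ℝ α]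

lemma hasDerivAt_fst {f : ℝ → ℝ × ℝ} {d : ℝ × ℝ} {t : ℝ} (h : HasDerivAt f d t) :
    HasDerivAt (fun τ => (f τ).1) d.1 t :=
  (ContinuousLinearMap.fst ℝ ℝ ℝ).hasFDerivAt.comp_hasDerivAt t h

lemma hasDerivAt_snd {f : ℝ → ℝ × ℝ} {d : ℝ × ℝ} {t : ℝ} (h : HasDerivAt f d t) :
    HasDerivAt (fun τ => (f τ).2) d.2 t :=
  (ContinuousLinearMap.snd ℝ ℝ ℝ).hasFDerivAt.comp_hasDerivAt t h

lemma dsp_decomp (g : (ℝ × ℝ) → ℝ → α) (x : ℝ × ℝ) (t : ℝ) (w : ℝ × ℝ) :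
    dsp g x t w = w.1 • dsp g x t ex + w.2 • dsp g x t ez := by
  have hw : w = w.1 • ex + w.2 • ez := by simp [ex, ez, Prod.ext_iff]
  show (fderiv ℝ (fun y => g y t) x) w = _
  conv_lhs => rw [hw]
  rw [map_add, map_smul, map_smul]; rfl

lemma dsp_dot_scalar (g : (ℝ × ℝ) → ℝ → ℝ) (x : ℝ × ℝ) (t : ℝ) (w : ℝ × ℝ) :
    dsp g x t w = dot (grad g x t) w := by
  rw [dsp_decomp g x t w]; simp [grad, dot]; ring

lemma dot_dsp_gradT (u V : (ℝ × ℝ) → ℝ → ℝ × ℝ) (x : ℝ × ℝ) (t : ℝ) (w : ℝ × ℝ) :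
    dot (V x t) (dsp u x t w) = dot (gradT u V x t) w := by
  rw [dsp_decomp u x t w]
  simp [gradT, dot, Prod.smul_fst, Prod.smul_snd, smul_eq_mul]
  ring

end aux2

/-- Kelvin circulation theorem for slice models: if
`∂_t V + u_S·∇V + (∇u_S)ᵀV = ∇c`, `φ` is the flow of `u_S`, and `γ` is a closed
(1-periodic) curve, then the circulation
`∫₀¹ V(φ(γ(σ),t), t) · ∂_σ[φ(γ(σ),t)] dσ` is constant in `t`. -/
theorem slice_kelvin_circulation
    (uS V : (ℝ × ℝ) → ℝ → ℝ × ℝ) (c : (ℝ × ℝ) → ℝ → ℝ)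
    (huS : Smooth2 uS) (hV : Smooth2 V) (hc : Smooth2 c)
    (heq : ∀ x t, pt V x t + dsp V x t (uS x t) + gradT uS V x t = grad c x t)
    (φ : (ℝ × ℝ) → ℝ → ℝ × ℝ) (hφ : Smooth2 φ)
    (hflow : ∀ X t, deriv (fun τ => φ X τ) t = uS (φ X t) t)
    (γ : ℝ → ℝ × ℝ) (hγ : ContDiff ℝ (⊤ : ℕ∞) γ) (hper : ∀ σ : ℝ, γ (σ + 1) = γ σ) :
    ∀ t₁ t₂ : ℝ,
      (∫ σ in (0:ℝ)..1, dot (V (φ (γ σ) t₁) t₁) (deriv (fun σ' => φ (γ σ') t₁) σ)) =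
      (∫ σ in (0:ℝ)..1, dot (V (φ (γ σ) t₂) t₂) (deriv (fun σ' => φ (γ σ') t₂) σ)) := by
  intro t₁ t₂
  -- the flow along the loop
  set Φ : ℝ × ℝ → ℝ × ℝ := fun p => φ (γ p.1) p.2 with hΦdef
  have hΦ : ContDiff ℝ (⊤ : ℕ∞) Φ := hφ.comp ((hγ.comp contDiff_fst).prodMk contDiff_snd)
  set W : ℝ × ℝ → ℝ × ℝ := fun p => V (Φ p) p.2 with hWdef
  have hWc : ContDiff ℝ (⊤ : ℕ∞) W := contDiff_comp_flow V hV Φ hΦ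
  set C : ℝ × ℝ → ℝ := fun p => c (Φ p) p.2 with hCdef
  have hCc : ContDiff ℝ (⊤ : ℕ∞) C := contDiff_comp_flow c hc Φ hΦ
  set Φσ : ℝ × ℝ → ℝ × ℝ := fun p => fderiv ℝ Φ p (1, 0) with hΦσdef
  have hΦσc : ContDiff ℝ (⊤ : ℕ∞) Φσ := contDiff_fderiv_apply Φ hΦ (1, 0)
  set F : ℝ × ℝ → ℝ := fun p => dot (W p) (Φσ p) with hFdef
  have hFc : ContDiff ℝ (⊤ : ℕ∞) F :=
    ((contDiff_fst.comp hWc).mul (contDiff_fst.comp hΦσc)).add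
      ((contDiff_snd.comp hWc).mul (contDiff_snd.comp hΦσc))
  -- time derivative of the flow is uS
  have hΦt : ∀ p : ℝ × ℝ, fderiv ℝ Φ p (0, 1) = uS (Φ p) p.2 := by
    intro p
    have h := hasDerivAt_slice2 Φ hΦ p.1 p.2
    have h2 : deriv (fun τ => φ (γ p.1) τ) p.2 = fderiv ℝ Φ (p.1, p.2) (0, 1) := h.deriv
    rw [hflow (γ p.1) p.2] at h2
    simpa using h2.symm
  -- the key pointwise identity : ∂ₜ F = ∂_σ C
  have hkey : ∀ p : ℝ × ℝ, fderiv ℝ F p (0, 1) = fderiv ℝ C p (1, 0) := by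
    intro p
    -- (a) material derivative of V along the flow
    have hDtW : fderiv ℝ W p (0, 1)
        = grad c (Φ p) p.2 - gradT uS V (Φ p) p.2 := by
      have h := fderiv_comp_flow V hV Φ hΦ p (0, 1)
      rw [hΦt p] at h
      have h2 := heq (Φ p) p.2
      rw [hWdef] at *
      rw [h]
      have : ((0:ℝ),(1:ℝ)).2 = (1:ℝ) := rfl
      rw [this, one_smul, eq_sub_iff_add_eq, ← h2]
      abel
    -- (b) mixed second derivative of the flow
    have hDtΦσ : fderiv ℝ Φσ p (0, 1) = dsp uS (Φ p) p.2 (Φσ p) := by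
      have hsw := fderiv_swap Φ hΦ p (1, 0) (0, 1)
      have hfun : (fun q => fderiv ℝ Φ q ((0:ℝ), (1:ℝ))) = fun q => uS (Φ q) q.2 :=
        funext hΦt
      rw [hfun] at hsw
      have h := fderiv_comp_flow uS huS Φ hΦ p (1, 0)
      have h0 : ((1:ℝ),(0:ℝ)).2 = (0:ℝ) := rfl
      rw [h0, zero_smul, add_zero] at h
      rw [hΦσdef]
      rw [hsw, h]
    -- (c) sigma derivative of c along the flow
    have hDσC : fderiv ℝ C p (1, 0) = dot (grad c (Φ p) p.2) (Φσ p) := by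
      have h := fderiv_comp_flow c hc Φ hΦ p (1, 0)
      have h0 : ((1:ℝ),(0:ℝ)).2 = (0:ℝ) := rfl
      rw [h0, zero_smul, add_zero] at h
      rw [hCdef]
      rw [h, dsp_dot_scalar]
    -- (e) product rule for F in time
    have hDtF : fderiv ℝ F p (0, 1)
        = dot (fderiv ℝ W p (0, 1)) (Φσ p) + dot (W p) (fderiv ℝ Φσ p (0, 1)) := by
      have hW2 := hasDerivAt_slice2 W hWc p.1 p.2
      have hΦσ2 := hasDerivAt_slice2 Φσ hΦσc p.1 p.2
      have hF2 := hasDerivAt_slice2 F hFc p.1 p.2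
      have hprod : HasDerivAt (fun t' => F (p.1, t'))
          ((fderiv ℝ W (p.1, p.2) (0,1)).1 * (Φσ (p.1, p.2)).1
            + (W (p.1, p.2)).1 * (fderiv ℝ Φσ (p.1, p.2) (0,1)).1
            + ((fderiv ℝ W (p.1, p.2) (0,1)).2 * (Φσ (p.1, p.2)).2
            + (W (p.1, p.2)).2 * (fderiv ℝ Φσ (p.1, p.2) (0,1)).2)) p.2 :=
        ((hasDerivAt_fst hW2).mul (hasDerivAt_fst hΦσ2)).add
          ((hasDerivAt_snd hW2).mul (hasDerivAt_snd hΦσ2))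
      have h5 := hF2.unique hprod
      simp only [Prod.mk.eta] at h5
      simp only [dot]
      rw [h5]; ring
    rw [hDtF, hDtW, hDtΦσ, hDσC, dot_dsp_gradT]
    simp only [dot, Prod.fst_sub, Prod.snd_sub]
    ring
  -- the circulation integral
  set I : ℝ → ℝ := fun t => ∫ σ in (0:ℝ)..1, F (σ, t) with hIdef
  have hI : ∀ t₀ : ℝ, HasDerivAt I 0 t₀ := by
    intro t₀
    have hFcont : Continuous F := hFc.continuous
    have hF'cont : Continuous (fun p : ℝ × ℝ => fderiv ℝ F p (0, 1)) :=
      (contDiff_fderiv_apply F hFc (0, 1)).continuous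
    obtain ⟨Cb, hCb⟩ :=
      ((isCompact_Icc (a := (0:ℝ)) (b := 1)).prod
        (isCompact_closedBall t₀ 1)).exists_bound_of_continuousOn hF'cont.continuousOn
    have key := intervalIntegral.hasDerivAt_integral_of_dominated_loc_of_deriv_le
      (F := fun t σ => F (σ, t)) (F' := fun t σ => fderiv ℝ F (σ, t) (0, 1))
      (x₀ := t₀) (a := (0:ℝ)) (b := 1) (bound := fun _ => Cb) (μ := MeasureTheory.volume)
      (s := Metric.ball t₀ 1) (Metric.ball_mem_nhds t₀ one_pos)
      (Filter.Eventually.of_forall fun t =>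
        (hFcont.comp (continuous_id.prodMk continuous_const)).aestronglyMeasurable)
      ((hFcont.comp (continuous_id.prodMk continuous_const)).intervalIntegrable 0 1)
      ((hF'cont.comp (continuous_id.prodMk continuous_const)).aestronglyMeasurable)
      (Filter.Eventually.of_forall fun σ hσ t ht => by
        apply hCb (σ, t)
        constructor
        · exact Set.mem_Icc_of_Ioc (Set.uIoc_of_le (by norm_num : (0:ℝ) ≤ 1) ▸ hσ)
        · exact Metric.ball_subset_closedBall ht)
      (intervalIntegrable_const)
      (Filter.Eventually.of_forall fun σ hσ t ht => hasDerivAt_slice2 F hFc σ t)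
    have hint : (∫ σ in (0:ℝ)..1, fderiv ℝ F (σ, t₀) (0, 1)) = 0 := by
      have hcalc : (∫ σ in (0:ℝ)..1, fderiv ℝ F (σ, t₀) (0, 1))
          = ∫ σ in (0:ℝ)..1, fderiv ℝ C (σ, t₀) (1, 0) := by
        apply intervalIntegral.integral_congr
        intro σ _
        exact hkey (σ, t₀)
      rw [hcalc]
      have hC'cont : Continuous (fun p : ℝ × ℝ => fderiv ℝ C p (1, 0)) :=
        (contDiff_fderiv_apply C hCc (1, 0)).continuous
      rw [intervalIntegral.integral_eq_sub_of_hasDerivAt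
        (fun σ _ => hasDerivAt_slice1 C hCc σ t₀)
        ((hC'cont.comp (continuous_id.prodMk continuous_const)).intervalIntegrable 0 1)]
      have hγ1 : γ 1 = γ 0 := by simpa using hper 0
      simp [hCdef, hΦdef, hγ1]
    rw [← hint]
    exact key.2
  have hconst : I t₁ = I t₂ :=
    is_const_of_deriv_eq_zero (fun t => (hI t).differentiableAt)
      (fun t => (hI t).deriv) t₁ t₂
  have hrw : ∀ t : ℝ,
      (∫ σ in (0:ℝ)..1, dot (V (φ (γ σ) t) t) (deriv (fun σ' => φ (γ σ') t) σ)) = I t := by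
    intro t
    apply intervalIntegral.integral_congr
    intro σ _
    show dot (V (φ (γ σ) t) t) (deriv (fun σ' => φ (γ σ') t) σ) = F (σ, t)
    have hd : deriv (fun σ' => φ (γ σ') t) σ = Φσ (σ, t) :=
      (hasDerivAt_slice1 Φ hΦ σ t).deriv
    rw [hd]
  rw [hrw t₁, hrw t₂, hconst]
end

section
/- Let s ∈ ℝ and let a, u_S : ℝ² × ℝ → ℝ² and m_T, b, c, θ_S, u_T, D : ℝ² × ℝ → ℝ be smooth with D > 0 everywhere, satisfying on ℝ² × ℝ: (i) ∂_t a + u_S·∇a + (∇u_S)ᵀa + m_T ∇u_T + b ∇θ_S − ∇c = 0; (ii) ∂_t m_T + u_S·∇m_T + s·b = 0; (iii) ∂_t θ_S + u_S·∇θ_S + s·u_T = 0; (iv) ∂_t D + div(D u_S) = 0. Then the potential vorticity q := (1/D)(∂_x V₂ − ∂_z V₁), where V := s·a − m_T ∇θ_S, satisfies the Lagrangian conservation law ∂_t q + u_S·∇q = 0 on ℝ² × ℝ. -/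
noncomputable section
namespace PVinfra

variable {E : Type*} [NormedAddCommGroup E] [NormedSpace ℝ E]

/-- directional derivative along constant direction. -/
noncomputable def pd (w : E) (f : E → ℝ) (p : E) : ℝ := fderiv ℝ f p w

lemma pd_smooth (w : E) {f : E → ℝ} (hf : ContDiff ℝ (⊤ : ℕ∞) f) : ContDiff ℝ (⊤ : ℕ∞) (pd w f) :=
  (hf.fderiv_right (by simp)).clm_apply contDiff_const

lemma pd_add (w : E) {f g : E → ℝ} (hf : Differentiable ℝ f) (hg : Differentiable ℝ g) (p : E) :
    pd w (fun q => f q + g q) p = pd w f p + pd w g p := by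
  unfold pd
  rw [fderiv_fun_add (hf p) (hg p)]; rfl

lemma pd_sub (w : E) {f g : E → ℝ} (hf : Differentiable ℝ f) (hg : Differentiable ℝ g) (p : E) :
    pd w (fun q => f q - g q) p = pd w f p - pd w g p := by
  unfold pd
  rw [fderiv_fun_sub (hf p) (hg p)]; rfl

lemma pd_mul (w : E) {f g : E → ℝ} (hf : Differentiable ℝ f) (hg : Differentiable ℝ g) (p : E) :
    pd w (fun q => f q * g q) p = pd w f p * g p + f p * pd w g p := by
  unfold pd
  rw [fderiv_fun_mul (hf p) (hg p)]
  simp only [ContinuousLinearMap.add_apply, ContinuousLinearMap.smul_apply, smul_eq_mul]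
  ring

lemma pd_const_mul (w : E) (c : ℝ) {f : E → ℝ} (hf : Differentiable ℝ f) (p : E) :
    pd w (fun q => c * f q) p = c * pd w f p := by
  unfold pd
  rw [fderiv_const_mul (hf p)]; rfl

lemma pd_zero (w : E) (p : E) : pd w (fun _ => (0:ℝ)) p = 0 := by
  unfold pd; rw [fderiv_fun_const]; rfl

lemma pd_congr (w : E) {f g : E → ℝ} (h : ∀ q, f q = g q) (p : E) :
    pd w f p = pd w g p := by
  have : f = g := funext h
  rw [this]

lemma pd_eq_zero (w : E) {f : E → ℝ} (h : ∀ q, f q = 0) (p : E) : pd w f p = 0 := by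
  rw [pd_congr w h p, pd_zero]

/-- Schwarz symmetry of second derivatives. -/
lemma pd_comm (v w : E) {f : E → ℝ} (hf : ContDiff ℝ (⊤ : ℕ∞) f) (p : E) :
    pd v (pd w f) p = pd w (pd v f) p := by
  have hd : Differentiable ℝ f := hf.differentiable (by simp)
  have hf' : ContDiff ℝ (⊤ : ℕ∞) (fderiv ℝ f) := hf.fderiv_right (by simp)
  have hd' : DifferentiableAt ℝ (fderiv ℝ f) p := (hf'.differentiable (by simp)) p
  have key : ∀ u u' : E, pd u (pd u' f) p = (fderiv ℝ (fderiv ℝ f) p) u u' := by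
    intro u u'
    have : pd u' f = fun q => (fderiv ℝ f q) u' := rfl
    rw [this]
    unfold pd
    rw [fderiv_clm_apply hd' (differentiableAt_const u')]
    simp
  rw [key v w, key w v]
  exact second_derivative_symmetric (fun y => (hd y).hasFDerivAt) hd'.hasFDerivAt v w

/-- expansion of the "W = s a - m θ'" shape -/
lemma pd_W_expand (w : E) (s : ℝ) {A M T : E → ℝ}
    (hA : Differentiable ℝ A) (hM : Differentiable ℝ M) (hT : Differentiable ℝ T) (p : E) :
    pd w (fun r => s * A r - M r * T r) p
      = s * pd w A p - (pd w M p * T p + M p * pd w T p) := by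
  rw [pd_sub w (hA.const_mul s) (hM.fun_mul hT) p, pd_const_mul w s hA p, pd_mul w hM hT p]

/-- expansion of the "transport + s·f" shape (eqs (ii),(iii)) -/
lemma pd_G_expand (w : E) (s : ℝ) {f3 u1 f1 u2 f2 f4 : E → ℝ}
    (h3 : Differentiable ℝ f3) (hu1 : Differentiable ℝ u1) (h1 : Differentiable ℝ f1)
    (hu2 : Differentiable ℝ u2) (h2 : Differentiable ℝ f2) (h4 : Differentiable ℝ f4) (p : E) :
    pd w (fun q => f3 q + (u1 q * f1 q + u2 q * f2 q) + s * f4 q) p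
      = pd w f3 p + (pd w u1 p * f1 p + u1 p * pd w f1 p
          + (pd w u2 p * f2 p + u2 p * pd w f2 p)) + s * pd w f4 p := by
  rw [pd_add w (h3.fun_add ((hu1.fun_mul h1).fun_add (hu2.fun_mul h2))) (h4.const_mul s) p,
    pd_add w h3 ((hu1.fun_mul h1).fun_add (hu2.fun_mul h2)) p,
    pd_add w (hu1.fun_mul h1) (hu2.fun_mul h2) p,
    pd_mul w hu1 h1 p, pd_mul w hu2 h2 p, pd_const_mul w s h4 p]

/-- expansion of the momentum-equation shape -/
lemma pd_F_expand (w : E) (ss : ℝ) {f3 u1 f1 u2 f2 g1 k1 g2 k2 cc : E → ℝ}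
    (h3 : Differentiable ℝ f3) (hu1 : Differentiable ℝ u1) (h1 : Differentiable ℝ f1)
    (hu2 : Differentiable ℝ u2) (h2 : Differentiable ℝ f2)
    (hg1 : Differentiable ℝ g1) (hk1 : Differentiable ℝ k1)
    (hg2 : Differentiable ℝ g2) (hk2 : Differentiable ℝ k2)
    (hcc : Differentiable ℝ cc) (p : E) :
    pd w (fun q => f3 q + (u1 q * f1 q + u2 q * f2 q)
        + (g1 q * k1 q + g2 q * k2 q) - ss * cc q) p
      = pd w f3 p + (pd w u1 p * f1 p + u1 p * pd w f1 p
          + (pd w u2 p * f2 p + u2 p * pd w f2 p))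
        + (pd w g1 p * k1 p + g1 p * pd w k1 p
          + (pd w g2 p * k2 p + g2 p * pd w k2 p)) - ss * pd w cc p := by
  rw [pd_sub w ((h3.fun_add ((hu1.fun_mul h1).fun_add (hu2.fun_mul h2))).fun_add
      ((hg1.fun_mul hk1).fun_add (hg2.fun_mul hk2))) (hcc.const_mul ss) p, pd_const_mul w ss hcc p,
    pd_add w (h3.fun_add ((hu1.fun_mul h1).fun_add (hu2.fun_mul h2))) ((hg1.fun_mul hk1).fun_add (hg2.fun_mul hk2)) p,
    pd_add w h3 ((hu1.fun_mul h1).fun_add (hu2.fun_mul h2)) p,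
    pd_add w (hu1.fun_mul h1) (hu2.fun_mul h2) p,
    pd_add w (hg1.fun_mul hk1) (hg2.fun_mul hk2) p,
    pd_mul w hu1 h1 p, pd_mul w hu2 h2 p, pd_mul w hg1 hk1 p, pd_mul w hg2 hk2 p]


section Key

abbrev E2 := (ℝ × ℝ) × ℝ

def eX : E2 := ((1,0),0)
def eZ : E2 := ((0,1),0)
def eT : E2 := ((0,0),1)

theorem key (s : ℝ) (A1 A2 U1 U2 MT B C TH UT DD : E2 → ℝ)
    (hA1 : ContDiff ℝ (⊤ : ℕ∞) A1) (hA2 : ContDiff ℝ (⊤ : ℕ∞) A2)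
    (hU1 : ContDiff ℝ (⊤ : ℕ∞) U1) (hU2 : ContDiff ℝ (⊤ : ℕ∞) U2)
    (hMT : ContDiff ℝ (⊤ : ℕ∞) MT) (hB : ContDiff ℝ (⊤ : ℕ∞) B) (hC : ContDiff ℝ (⊤ : ℕ∞) C)
    (hTH : ContDiff ℝ (⊤ : ℕ∞) TH) (hUT : ContDiff ℝ (⊤ : ℕ∞) UT) (hDD : ContDiff ℝ (⊤ : ℕ∞) DD)
    (hDDpos : ∀ p, 0 < DD p)
    (e1 : ∀ p, pd eT A1 p + (U1 p * pd eX A1 p + U2 p * pd eZ A1 p)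
      + (pd eX U1 p * A1 p + pd eX U2 p * A2 p)
      + MT p * pd eX UT p + B p * pd eX TH p - pd eX C p = 0)
    (e2 : ∀ p, pd eT A2 p + (U1 p * pd eX A2 p + U2 p * pd eZ A2 p)
      + (pd eZ U1 p * A1 p + pd eZ U2 p * A2 p)
      + MT p * pd eZ UT p + B p * pd eZ TH p - pd eZ C p = 0)
    (e3 : ∀ p, pd eT MT p + (U1 p * pd eX MT p + U2 p * pd eZ MT p) + s * B p = 0)
    (e4 : ∀ p, pd eT TH p + (U1 p * pd eX TH p + U2 p * pd eZ TH p) + s * UT p = 0)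
    (e5 : ∀ p, pd eT DD p + (pd eX (fun q => DD q * U1 q) p
      + pd eZ (fun q => DD q * U2 q) p) = 0) :
    ∀ p, pd eT (fun q => (DD q)⁻¹ *
        (pd eX (fun r => s * A2 r - MT r * pd eZ TH r) q
          - pd eZ (fun r => s * A1 r - MT r * pd eX TH r) q)) p
      + (U1 p * pd eX (fun q => (DD q)⁻¹ *
          (pd eX (fun r => s * A2 r - MT r * pd eZ TH r) q
            - pd eZ (fun r => s * A1 r - MT r * pd eX TH r) q)) p
        + U2 p * pd eZ (fun q => (DD q)⁻¹ *
          (pd eX (fun r => s * A2 r - MT r * pd eZ TH r) q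
            - pd eZ (fun r => s * A1 r - MT r * pd eX TH r) q)) p) = 0 := by
  intro p
  set W1 := fun r : E2 => s * A1 r - MT r * pd eX TH r with hW1d
  set W2 := fun r : E2 => s * A2 r - MT r * pd eZ TH r with hW2d
  set Q := fun q : E2 => (DD q)⁻¹ * (pd eX W2 q - pd eZ W1 q) with hQd
  -- differentiability bookkeeping
  have dA1 := hA1.differentiable (by simp)
  have dA2 := hA2.differentiable (by simp)
  have dU1 := hU1.differentiable (by simp)
  have dU2 := hU2.differentiable (by simp)
  have dMT := hMT.differentiable (by simp)
  have dDD := hDD.differentiable (by simp)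
  have dUT := hUT.differentiable (by simp)
  have dXTH := (pd_smooth eX hTH).differentiable (by simp)
  have dZTH := (pd_smooth eZ hTH).differentiable (by simp)
  have dTTH := (pd_smooth eT hTH).differentiable (by simp)
  have dXC := (pd_smooth eX hC).differentiable (by simp)
  have dZC := (pd_smooth eZ hC).differentiable (by simp)
  have dXU1 := (pd_smooth eX hU1).differentiable (by simp)
  have dZU1 := (pd_smooth eZ hU1).differentiable (by simp)
  have dXU2 := (pd_smooth eX hU2).differentiable (by simp)
  have dZU2 := (pd_smooth eZ hU2).differentiable (by simp)
  have sW1 : ContDiff ℝ (⊤ : ℕ∞) W1 := by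
    rw [hW1d]; exact (contDiff_const.mul hA1).sub (hMT.mul (pd_smooth eX hTH))
  have sW2 : ContDiff ℝ (⊤ : ℕ∞) W2 := by
    rw [hW2d]; exact (contDiff_const.mul hA2).sub (hMT.mul (pd_smooth eZ hTH))
  have dW1 := sW1.differentiable (by simp)
  have dW2 := sW2.differentiable (by simp)
  have dXW1 := (pd_smooth eX sW1).differentiable (by simp)
  have dZW1 := (pd_smooth eZ sW1).differentiable (by simp)
  have dTW1 := (pd_smooth eT sW1).differentiable (by simp)
  have dXW2 := (pd_smooth eX sW2).differentiable (by simp)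
  have dZW2 := (pd_smooth eZ sW2).differentiable (by simp)
  have dTW2 := (pd_smooth eT sW2).differentiable (by simp)
  have dQ : Differentiable ℝ Q := by
    rw [hQd]
    exact (Differentiable.inv dDD (fun q => ne_of_gt (hDDpos q))).mul
      (((pd_smooth eX sW2).differentiable (by simp)).sub ((pd_smooth eZ sW1).differentiable (by simp)))
  -- Step 1: evolution of W
  have hM1 : ∀ q, pd eT W1 q + (U1 q * pd eX W1 q + U2 q * pd eZ W1 q)
      + (pd eX U1 q * W1 q + pd eX U2 q * W2 q) - s * pd eX C q = 0 := by
    intro q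
    have w1T : pd eT W1 q = s * pd eT A1 q
        - (pd eT MT q * pd eX TH q + MT q * pd eT (pd eX TH) q) := by
      rw [hW1d]; exact pd_W_expand eT s dA1 dMT dXTH q
    have w1X : pd eX W1 q = s * pd eX A1 q
        - (pd eX MT q * pd eX TH q + MT q * pd eX (pd eX TH) q) := by
      rw [hW1d]; exact pd_W_expand eX s dA1 dMT dXTH q
    have w1Z : pd eZ W1 q = s * pd eZ A1 q
        - (pd eZ MT q * pd eX TH q + MT q * pd eZ (pd eX TH) q) := by
      rw [hW1d]; exact pd_W_expand eZ s dA1 dMT dXTH q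
    have vW1 : W1 q = s * A1 q - MT q * pd eX TH q := by rw [hW1d]
    have vW2 : W2 q = s * A2 q - MT q * pd eZ TH q := by rw [hW2d]
    have cTX : pd eT (pd eX TH) q = pd eX (pd eT TH) q := pd_comm eT eX hTH q
    have cZX : pd eZ (pd eX TH) q = pd eX (pd eZ TH) q := pd_comm eZ eX hTH q
    have D4x : pd eX (fun r => pd eT TH r
        + (U1 r * pd eX TH r + U2 r * pd eZ TH r) + s * UT r) q = 0 :=
      pd_eq_zero eX e4 q
    rw [pd_G_expand eX s dTTH dU1 dXTH dU2 dZTH dUT q] at D4x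
    rw [w1T, w1X, w1Z, cTX, cZX, vW1, vW2]
    linear_combination s * e1 q - pd eX TH q * e3 q - MT q * D4x
  have hM2 : ∀ q, pd eT W2 q + (U1 q * pd eX W2 q + U2 q * pd eZ W2 q)
      + (pd eZ U1 q * W1 q + pd eZ U2 q * W2 q) - s * pd eZ C q = 0 := by
    intro q
    have w2T : pd eT W2 q = s * pd eT A2 q
        - (pd eT MT q * pd eZ TH q + MT q * pd eT (pd eZ TH) q) := by
      rw [hW2d]; exact pd_W_expand eT s dA2 dMT dZTH q
    have w2X : pd eX W2 q = s * pd eX A2 q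
        - (pd eX MT q * pd eZ TH q + MT q * pd eX (pd eZ TH) q) := by
      rw [hW2d]; exact pd_W_expand eX s dA2 dMT dZTH q
    have w2Z : pd eZ W2 q = s * pd eZ A2 q
        - (pd eZ MT q * pd eZ TH q + MT q * pd eZ (pd eZ TH) q) := by
      rw [hW2d]; exact pd_W_expand eZ s dA2 dMT dZTH q
    have vW1 : W1 q = s * A1 q - MT q * pd eX TH q := by rw [hW1d]
    have vW2 : W2 q = s * A2 q - MT q * pd eZ TH q := by rw [hW2d]
    have cTZ : pd eT (pd eZ TH) q = pd eZ (pd eT TH) q := pd_comm eT eZ hTH q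
    have cZX : pd eZ (pd eX TH) q = pd eX (pd eZ TH) q := pd_comm eZ eX hTH q
    have D4z : pd eZ (fun r => pd eT TH r
        + (U1 r * pd eX TH r + U2 r * pd eZ TH r) + s * UT r) q = 0 :=
      pd_eq_zero eZ e4 q
    rw [pd_G_expand eZ s dTTH dU1 dXTH dU2 dZTH dUT q] at D4z
    rw [cZX] at D4z
    rw [w2T, w2X, w2Z, cTZ, vW1, vW2]
    linear_combination s * e2 q - pd eZ TH q * e3 q - MT q * D4z
  -- Step 2: evolution of the vorticity
  have hOm : pd eT (fun r => pd eX W2 r - pd eZ W1 r) p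
      + (U1 p * pd eX (fun r => pd eX W2 r - pd eZ W1 r) p
        + U2 p * pd eZ (fun r => pd eX W2 r - pd eZ W1 r) p)
      + (pd eX U1 p + pd eZ U2 p) * (pd eX W2 p - pd eZ W1 p) = 0 := by
    have oT := pd_sub eT dXW2 dZW1 p
    have oX := pd_sub eX dXW2 dZW1 p
    have oZ := pd_sub eZ dXW2 dZW1 p
    have D2x : pd eX (fun r => pd eT W2 r + (U1 r * pd eX W2 r + U2 r * pd eZ W2 r)
        + (pd eZ U1 r * W1 r + pd eZ U2 r * W2 r) - s * pd eZ C r) p = 0 :=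
      pd_eq_zero eX hM2 p
    rw [pd_F_expand eX s dTW2 dU1 dXW2 dU2 dZW2 dZU1 dW1 dZU2 dW2 dZC p] at D2x
    have D1z : pd eZ (fun r => pd eT W1 r + (U1 r * pd eX W1 r + U2 r * pd eZ W1 r)
        + (pd eX U1 r * W1 r + pd eX U2 r * W2 r) - s * pd eX C r) p = 0 :=
      pd_eq_zero eZ hM1 p
    rw [pd_F_expand eZ s dTW1 dU1 dXW1 dU2 dZW1 dXU1 dW1 dXU2 dW2 dXC p] at D1z
    have cZX1 : pd eZ (pd eX W1) p = pd eX (pd eZ W1) p := pd_comm eZ eX sW1 p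
    have cZXC : pd eZ (pd eX C) p = pd eX (pd eZ C) p := pd_comm eZ eX hC p
    have cZXU1 : pd eZ (pd eX U1) p = pd eX (pd eZ U1) p := pd_comm eZ eX hU1 p
    have cZXU2 : pd eZ (pd eX U2) p = pd eX (pd eZ U2) p := pd_comm eZ eX hU2 p
    rw [cZX1, cZXC, cZXU1, cZXU2] at D1z
    have cTX2 : pd eT (pd eX W2) p = pd eX (pd eT W2) p := pd_comm eT eX sW2 p
    have cTZ1 : pd eT (pd eZ W1) p = pd eZ (pd eT W1) p := pd_comm eT eZ sW1 p
    have cZX2 : pd eZ (pd eX W2) p = pd eX (pd eZ W2) p := pd_comm eZ eX sW2 p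
    rw [oT, oX, oZ, cTX2, cTZ1, cZX2]
    linear_combination D2x - D1z
  -- Step 3: divide by D
  have hDQ : ∀ q, pd eX W2 q - pd eZ W1 q = DD q * Q q := by
    intro q
    have hq : Q q = (DD q)⁻¹ * (pd eX W2 q - pd eZ W1 q) := by rw [hQd]
    rw [hq, ← mul_assoc, mul_inv_cancel₀ (ne_of_gt (hDDpos q)), one_mul]
  have e5' : pd eT DD p + ((pd eX DD p * U1 p + DD p * pd eX U1 p)
      + (pd eZ DD p * U2 p + DD p * pd eZ U2 p)) = 0 := by
    have h := e5 p
    rwa [pd_mul eX dDD dU1 p, pd_mul eZ dDD dU2 p] at h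
  have pw : ∀ w, pd w (fun r => pd eX W2 r - pd eZ W1 r) p
      = pd w DD p * Q p + DD p * pd w Q p := by
    intro w
    rw [pd_congr w hDQ p, pd_mul w dDD dQ p]
  rw [pw eT, pw eX, pw eZ, hDQ p] at hOm
  have final : DD p * (pd eT Q p + (U1 p * pd eX Q p + U2 p * pd eZ Q p)) = 0 := by
    linear_combination hOm - Q p * e5'
  rcases mul_eq_zero.mp final with h | h
  · exact absurd h (ne_of_gt (hDDpos p))
  · exact h

end Key

end PVinfra


namespace PVbridge

open PVinfra

/-- splitting a spatial direction into the coordinate directions -/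
lemma dir_split (f : E2 → ℝ) (p : E2) (v : ℝ × ℝ) :
    fderiv ℝ f p ((v, (0:ℝ)) : E2) = v.1 * pd eX f p + v.2 * pd eZ f p := by
  have hv : ((v, (0:ℝ)) : E2) = v.1 • eX + v.2 • eZ := by
    simp [eX, eZ, Prod.ext_iff]
  rw [hv, map_add, map_smul, map_smul]
  rfl

lemma fderiv_fst_apply {A : E2 → ℝ × ℝ} {p : E2} (h : DifferentiableAt ℝ A p) (w : E2) :
    (fderiv ℝ A p w).1 = fderiv ℝ (fun q => (A q).1) p w := by
  rw [h.hasFDerivAt.fst.fderiv]; rfl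

lemma fderiv_snd_apply {A : E2 → ℝ × ℝ} {p : E2} (h : DifferentiableAt ℝ A p) (w : E2) :
    (fderiv ℝ A p w).2 = fderiv ℝ (fun q => (A q).2) p w := by
  rw [h.hasFDerivAt.snd.fderiv]; rfl

lemma pt_joint {α : Type*} [NormedAddCommGroup α] [NormedSpace ℝ α]
    {g : (ℝ × ℝ) → ℝ → α} {G : E2 → α} (hG : ∀ x t, g x t = G (x, t))
    {x : ℝ × ℝ} {t : ℝ} (h : DifferentiableAt ℝ G (x, t)) :
    pt g x t = fderiv ℝ G (x, t) eT := by
  have h1 : HasDerivAt (fun τ : ℝ => ((x, τ) : E2)) ((((0,0) : ℝ × ℝ), (1:ℝ)) : E2) t := by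
    exact (HasDerivAt.prodMk (hasDerivAt_const t x) (hasDerivAt_id t))
  have h2 : HasDerivAt (fun τ => G (x, τ)) (fderiv ℝ G (x, t) eT) t :=
    h.hasFDerivAt.comp_hasDerivAt t h1
  have h3 : (fun τ => g x τ) = fun τ => G (x, τ) := funext fun τ => hG x τ
  show deriv (fun τ => g x τ) t = _
  rw [h3]
  exact h2.deriv

lemma dsp_joint {α : Type*} [NormedAddCommGroup α] [NormedSpace ℝ α]
    {g : (ℝ × ℝ) → ℝ → α} {G : E2 → α} (hG : ∀ x t, g x t = G (x, t))
    {x : ℝ × ℝ} {t : ℝ} (h : DifferentiableAt ℝ G (x, t)) (v : ℝ × ℝ) :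
    dsp g x t v = fderiv ℝ G (x, t) ((v, (0:ℝ)) : E2) := by
  have h1 : HasFDerivAt (fun y : ℝ × ℝ => ((y, t) : E2))
      ((ContinuousLinearMap.id ℝ (ℝ × ℝ)).prod (0 : (ℝ × ℝ) →L[ℝ] ℝ)) x :=
    HasFDerivAt.prodMk (hasFDerivAt_id x) (hasFDerivAt_const t x)
  have h2 : HasFDerivAt (fun y : ℝ × ℝ => G (y, t))
      ((fderiv ℝ G (x, t)).comp
        ((ContinuousLinearMap.id ℝ (ℝ × ℝ)).prod (0 : (ℝ × ℝ) →L[ℝ] ℝ))) x :=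
    h.hasFDerivAt.comp x h1
  have h3 : (fun y => g y t) = fun y : ℝ × ℝ => G (y, t) := funext fun y => hG y t
  show fderiv ℝ (fun y => g y t) x v = _
  rw [h3, h2.fderiv]
  rfl

section scalar

variable {g : (ℝ × ℝ) → ℝ → ℝ} {G : E2 → ℝ}

lemma pt_pd (hFG : (fun q : E2 => g q.1 q.2) = G) (h : Differentiable ℝ G) (x : ℝ × ℝ) (t : ℝ) :
    pt g x t = pd eT G (x, t) := by
  subst hFG
  exact pt_joint (fun _ _ => rfl) (h (x, t))

lemma dsp_pd_v (hFG : (fun q : E2 => g q.1 q.2) = G) (h : Differentiable ℝ G)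
    (x : ℝ × ℝ) (t : ℝ) (v : ℝ × ℝ) :
    dsp g x t v = v.1 * pd eX G (x, t) + v.2 * pd eZ G (x, t) := by
  subst hFG
  rw [dsp_joint (fun _ _ => rfl) (h (x, t)) v]
  exact dir_split _ _ v

lemma dsp_pd_ex (hFG : (fun q : E2 => g q.1 q.2) = G) (h : Differentiable ℝ G)
    (x : ℝ × ℝ) (t : ℝ) :
    dsp g x t ex = pd eX G (x, t) := by
  subst hFG
  exact dsp_joint (fun _ _ => rfl) (h (x, t)) ex

lemma dsp_pd_ez (hFG : (fun q : E2 => g q.1 q.2) = G) (h : Differentiable ℝ G)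
    (x : ℝ × ℝ) (t : ℝ) :
    dsp g x t ez = pd eZ G (x, t) := by
  subst hFG
  exact dsp_joint (fun _ _ => rfl) (h (x, t)) ez

end scalar

section vector

variable {gv : (ℝ × ℝ) → ℝ → ℝ × ℝ} {G1 G2 : E2 → ℝ}

lemma pt_fst_pd (hgv : Smooth2 gv) (hFG : (fun q : E2 => (gv q.1 q.2).1) = G1)
    (x : ℝ × ℝ) (t : ℝ) : (pt gv x t).1 = pd eT G1 (x, t) := by
  subst hFG
  have hj : ContDiff ℝ (⊤ : ℕ∞) (fun q : E2 => gv q.1 q.2) := hgv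
  rw [pt_joint (g := gv) (G := fun q : E2 => gv q.1 q.2) (fun _ _ => rfl)
    ((hj.differentiable (by simp)) (x, t))]
  exact fderiv_fst_apply ((hj.differentiable (by simp)) (x, t)) eT

lemma pt_snd_pd (hgv : Smooth2 gv) (hFG : (fun q : E2 => (gv q.1 q.2).2) = G2)
    (x : ℝ × ℝ) (t : ℝ) : (pt gv x t).2 = pd eT G2 (x, t) := by
  subst hFG
  have hj : ContDiff ℝ (⊤ : ℕ∞) (fun q : E2 => gv q.1 q.2) := hgv
  rw [pt_joint (g := gv) (G := fun q : E2 => gv q.1 q.2) (fun _ _ => rfl)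
    ((hj.differentiable (by simp)) (x, t))]
  exact fderiv_snd_apply ((hj.differentiable (by simp)) (x, t)) eT

lemma dsp_fst_pd_v (hgv : Smooth2 gv) (hFG : (fun q : E2 => (gv q.1 q.2).1) = G1)
    (x : ℝ × ℝ) (t : ℝ) (v : ℝ × ℝ) :
    (dsp gv x t v).1 = v.1 * pd eX G1 (x, t) + v.2 * pd eZ G1 (x, t) := by
  subst hFG
  have hj : ContDiff ℝ (⊤ : ℕ∞) (fun q : E2 => gv q.1 q.2) := hgv
  rw [dsp_joint (g := gv) (G := fun q : E2 => gv q.1 q.2) (fun _ _ => rfl)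
    ((hj.differentiable (by simp)) (x, t)) v,
    fderiv_fst_apply ((hj.differentiable (by simp)) (x, t)) _]
  exact dir_split _ _ v

lemma dsp_snd_pd_v (hgv : Smooth2 gv) (hFG : (fun q : E2 => (gv q.1 q.2).2) = G2)
    (x : ℝ × ℝ) (t : ℝ) (v : ℝ × ℝ) :
    (dsp gv x t v).2 = v.1 * pd eX G2 (x, t) + v.2 * pd eZ G2 (x, t) := by
  subst hFG
  have hj : ContDiff ℝ (⊤ : ℕ∞) (fun q : E2 => gv q.1 q.2) := hgv
  rw [dsp_joint (g := gv) (G := fun q : E2 => gv q.1 q.2) (fun _ _ => rfl)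
    ((hj.differentiable (by simp)) (x, t)) v,
    fderiv_snd_apply ((hj.differentiable (by simp)) (x, t)) _]
  exact dir_split _ _ v

lemma dsp_fst_pd_ex (hgv : Smooth2 gv) (hFG : (fun q : E2 => (gv q.1 q.2).1) = G1)
    (x : ℝ × ℝ) (t : ℝ) : (dsp gv x t ex).1 = pd eX G1 (x, t) := by
  subst hFG
  have hj : ContDiff ℝ (⊤ : ℕ∞) (fun q : E2 => gv q.1 q.2) := hgv
  rw [dsp_joint (g := gv) (G := fun q : E2 => gv q.1 q.2) (fun _ _ => rfl)
    ((hj.differentiable (by simp)) (x, t)) ex]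
  exact fderiv_fst_apply ((hj.differentiable (by simp)) (x, t)) _

lemma dsp_snd_pd_ex (hgv : Smooth2 gv) (hFG : (fun q : E2 => (gv q.1 q.2).2) = G2)
    (x : ℝ × ℝ) (t : ℝ) : (dsp gv x t ex).2 = pd eX G2 (x, t) := by
  subst hFG
  have hj : ContDiff ℝ (⊤ : ℕ∞) (fun q : E2 => gv q.1 q.2) := hgv
  rw [dsp_joint (g := gv) (G := fun q : E2 => gv q.1 q.2) (fun _ _ => rfl)
    ((hj.differentiable (by simp)) (x, t)) ex]
  exact fderiv_snd_apply ((hj.differentiable (by simp)) (x, t)) _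

lemma dsp_fst_pd_ez (hgv : Smooth2 gv) (hFG : (fun q : E2 => (gv q.1 q.2).1) = G1)
    (x : ℝ × ℝ) (t : ℝ) : (dsp gv x t ez).1 = pd eZ G1 (x, t) := by
  subst hFG
  have hj : ContDiff ℝ (⊤ : ℕ∞) (fun q : E2 => gv q.1 q.2) := hgv
  rw [dsp_joint (g := gv) (G := fun q : E2 => gv q.1 q.2) (fun _ _ => rfl)
    ((hj.differentiable (by simp)) (x, t)) ez]
  exact fderiv_fst_apply ((hj.differentiable (by simp)) (x, t)) _

lemma dsp_snd_pd_ez (hgv : Smooth2 gv) (hFG : (fun q : E2 => (gv q.1 q.2).2) = G2)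
    (x : ℝ × ℝ) (t : ℝ) : (dsp gv x t ez).2 = pd eZ G2 (x, t) := by
  subst hFG
  have hj : ContDiff ℝ (⊤ : ℕ∞) (fun q : E2 => gv q.1 q.2) := hgv
  rw [dsp_joint (g := gv) (G := fun q : E2 => gv q.1 q.2) (fun _ _ => rfl)
    ((hj.differentiable (by simp)) (x, t)) ez]
  exact fderiv_snd_apply ((hj.differentiable (by simp)) (x, t)) _

end vector



theorem main_aux
    (s : ℝ) (a uS : (ℝ × ℝ) → ℝ → ℝ × ℝ)
    (mT b c θS uT D : (ℝ × ℝ) → ℝ → ℝ)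
    (ha : Smooth2 a) (huS : Smooth2 uS) (hmT : Smooth2 mT) (hb : Smooth2 b)
    (hc : Smooth2 c) (hθS : Smooth2 θS) (huT : Smooth2 uT) (hD : Smooth2 D)
    (hDpos : ∀ x t, 0 < D x t)
    (hi : ∀ x t, pt a x t + dsp a x t (uS x t) + gradT uS a x t
      + mT x t • grad uT x t + b x t • grad θS x t - grad c x t = 0)
    (hii : ∀ x t, pt mT x t + dsp mT x t (uS x t) + s * b x t = 0)
    (hiii : ∀ x t, pt θS x t + dsp θS x t (uS x t) + s * uT x t = 0)
    (hiv : ∀ x t, pt D x t + div2 (fun y τ => D y τ • uS y τ) x t = 0) :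
    ∀ (x : ℝ × ℝ) (t : ℝ),
      pt (fun y τ => (D y τ)⁻¹ *
          (dsp (fun z σ => (s • a z σ - mT z σ • grad θS z σ).2) y τ ex
            - dsp (fun z σ => (s • a z σ - mT z σ • grad θS z σ).1) y τ ez)) x t
        + dsp (fun y τ => (D y τ)⁻¹ *
            (dsp (fun z σ => (s • a z σ - mT z σ • grad θS z σ).2) y τ ex
              - dsp (fun z σ => (s • a z σ - mT z σ • grad θS z σ).1) y τ ez)) x t
            (uS x t) = 0 := by
  intro x t
  have haj : ContDiff ℝ (⊤ : ℕ∞) (fun q : E2 => a q.1 q.2) := ha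
  have huj : ContDiff ℝ (⊤ : ℕ∞) (fun q : E2 => uS q.1 q.2) := huS
  have hA1 : ContDiff ℝ (⊤ : ℕ∞) (fun q : E2 => (a q.1 q.2).1) := haj.fst
  have hA2 : ContDiff ℝ (⊤ : ℕ∞) (fun q : E2 => (a q.1 q.2).2) := haj.snd
  have hU1 : ContDiff ℝ (⊤ : ℕ∞) (fun q : E2 => (uS q.1 q.2).1) := huj.fst
  have hU2 : ContDiff ℝ (⊤ : ℕ∞) (fun q : E2 => (uS q.1 q.2).2) := huj.snd
  have hMTj : ContDiff ℝ (⊤ : ℕ∞) (fun q : E2 => mT q.1 q.2) := hmT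
  have hBj : ContDiff ℝ (⊤ : ℕ∞) (fun q : E2 => b q.1 q.2) := hb
  have hCj : ContDiff ℝ (⊤ : ℕ∞) (fun q : E2 => c q.1 q.2) := hc
  have hTHj : ContDiff ℝ (⊤ : ℕ∞) (fun q : E2 => θS q.1 q.2) := hθS
  have hUTj : ContDiff ℝ (⊤ : ℕ∞) (fun q : E2 => uT q.1 q.2) := huT
  have hDj : ContDiff ℝ (⊤ : ℕ∞) (fun q : E2 => D q.1 q.2) := hD
  have dTH := hTHj.differentiable (by simp)
  have dUTj := hUTj.differentiable (by simp)
  have dCj := hCj.differentiable (by simp)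
  have dMTj := hMTj.differentiable (by simp)
  have dDj := hDj.differentiable (by simp)
  have hDpos' : ∀ p : E2, 0 < D p.1 p.2 := fun p => hDpos p.1 p.2
  -- equation (i), first component
  have e1 : ∀ p : E2, pd eT (fun q : E2 => (a q.1 q.2).1) p
      + ((uS p.1 p.2).1 * pd eX (fun q : E2 => (a q.1 q.2).1) p
        + (uS p.1 p.2).2 * pd eZ (fun q : E2 => (a q.1 q.2).1) p)
      + (pd eX (fun q : E2 => (uS q.1 q.2).1) p * (a p.1 p.2).1
        + pd eX (fun q : E2 => (uS q.1 q.2).2) p * (a p.1 p.2).2)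
      + mT p.1 p.2 * pd eX (fun q : E2 => uT q.1 q.2) p
      + b p.1 p.2 * pd eX (fun q : E2 => θS q.1 q.2) p
      - pd eX (fun q : E2 => c q.1 q.2) p = 0 := by
    intro p
    have h := congrArg Prod.fst (hi p.1 p.2)
    simp only [gradT, grad, dot, Prod.fst_add, Prod.fst_sub, Prod.smul_fst, smul_eq_mul,
      Prod.fst_zero] at h
    rw [pt_fst_pd ha rfl p.1 p.2, dsp_fst_pd_v ha rfl p.1 p.2 (uS p.1 p.2),
      dsp_fst_pd_ex huS rfl p.1 p.2, dsp_snd_pd_ex huS rfl p.1 p.2,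
      dsp_pd_ex rfl dUTj p.1 p.2, dsp_pd_ex rfl dTH p.1 p.2,
      dsp_pd_ex rfl dCj p.1 p.2, Prod.mk.eta] at h
    exact h
  -- equation (i), second component
  have e2 : ∀ p : E2, pd eT (fun q : E2 => (a q.1 q.2).2) p
      + ((uS p.1 p.2).1 * pd eX (fun q : E2 => (a q.1 q.2).2) p
        + (uS p.1 p.2).2 * pd eZ (fun q : E2 => (a q.1 q.2).2) p)
      + (pd eZ (fun q : E2 => (uS q.1 q.2).1) p * (a p.1 p.2).1
        + pd eZ (fun q : E2 => (uS q.1 q.2).2) p * (a p.1 p.2).2)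
      + mT p.1 p.2 * pd eZ (fun q : E2 => uT q.1 q.2) p
      + b p.1 p.2 * pd eZ (fun q : E2 => θS q.1 q.2) p
      - pd eZ (fun q : E2 => c q.1 q.2) p = 0 := by
    intro p
    have h := congrArg Prod.snd (hi p.1 p.2)
    simp only [gradT, grad, dot, Prod.snd_add, Prod.snd_sub, Prod.smul_snd, smul_eq_mul,
      Prod.snd_zero] at h
    rw [pt_snd_pd ha rfl p.1 p.2, dsp_snd_pd_v ha rfl p.1 p.2 (uS p.1 p.2),
      dsp_fst_pd_ez huS rfl p.1 p.2, dsp_snd_pd_ez huS rfl p.1 p.2,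
      dsp_pd_ez rfl dUTj p.1 p.2, dsp_pd_ez rfl dTH p.1 p.2,
      dsp_pd_ez rfl dCj p.1 p.2, Prod.mk.eta] at h
    exact h
  -- equation (ii)
  have e3 : ∀ p : E2, pd eT (fun q : E2 => mT q.1 q.2) p
      + ((uS p.1 p.2).1 * pd eX (fun q : E2 => mT q.1 q.2) p
        + (uS p.1 p.2).2 * pd eZ (fun q : E2 => mT q.1 q.2) p)
      + s * b p.1 p.2 = 0 := by
    intro p
    have h := hii p.1 p.2
    rw [pt_pd rfl dMTj p.1 p.2, dsp_pd_v rfl dMTj p.1 p.2 (uS p.1 p.2), Prod.mk.eta] at h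
    exact h
  -- equation (iii)
  have e4 : ∀ p : E2, pd eT (fun q : E2 => θS q.1 q.2) p
      + ((uS p.1 p.2).1 * pd eX (fun q : E2 => θS q.1 q.2) p
        + (uS p.1 p.2).2 * pd eZ (fun q : E2 => θS q.1 q.2) p)
      + s * uT p.1 p.2 = 0 := by
    intro p
    have h := hiii p.1 p.2
    rw [pt_pd rfl dTH p.1 p.2, dsp_pd_v rfl dTH p.1 p.2 (uS p.1 p.2), Prod.mk.eta] at h
    exact h
  -- equation (iv)
  have e5 : ∀ p : E2, pd eT (fun q : E2 => D q.1 q.2) p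
      + (pd eX (fun q : E2 => D q.1 q.2 * (uS q.1 q.2).1) p
        + pd eZ (fun q : E2 => D q.1 q.2 * (uS q.1 q.2).2) p) = 0 := by
    intro p
    have h := hiv p.1 p.2
    simp only [div2] at h
    rw [pt_pd rfl dDj p.1 p.2,
      dsp_pd_ex (g := fun y τ => (D y τ • uS y τ).1)
        (G := fun q : E2 => D q.1 q.2 * (uS q.1 q.2).1) rfl
        (dDj.mul (hU1.differentiable (by simp))) p.1 p.2,
      dsp_pd_ez (g := fun y τ => (D y τ • uS y τ).2)
        (G := fun q : E2 => D q.1 q.2 * (uS q.1 q.2).2) rfl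
        (dDj.mul (hU2.differentiable (by simp))) p.1 p.2, Prod.mk.eta] at h
    exact h
  -- conversion of the goal
  have hW1s : ContDiff ℝ (⊤ : ℕ∞) (fun r : E2 => s * (a r.1 r.2).1
      - mT r.1 r.2 * pd eX (fun q : E2 => θS q.1 q.2) r) :=
    (contDiff_const.mul hA1).sub (hMTj.mul (pd_smooth eX hTHj))
  have hW2s : ContDiff ℝ (⊤ : ℕ∞) (fun r : E2 => s * (a r.1 r.2).2
      - mT r.1 r.2 * pd eZ (fun q : E2 => θS q.1 q.2) r) :=
    (contDiff_const.mul hA2).sub (hMTj.mul (pd_smooth eZ hTHj))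
  have dW1 := hW1s.differentiable (by simp)
  have dW2 := hW2s.differentiable (by simp)
  have hFG1 : (fun q : E2 => (s • a q.1 q.2 - mT q.1 q.2 • grad θS q.1 q.2).1)
      = fun r : E2 => s * (a r.1 r.2).1 - mT r.1 r.2 * pd eX (fun q : E2 => θS q.1 q.2) r := by
    funext q
    simp only [Prod.fst_sub, Prod.smul_fst, smul_eq_mul, grad]
    rw [dsp_pd_ex rfl dTH q.1 q.2, Prod.mk.eta]
  have hFG2 : (fun q : E2 => (s • a q.1 q.2 - mT q.1 q.2 • grad θS q.1 q.2).2)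
      = fun r : E2 => s * (a r.1 r.2).2 - mT r.1 r.2 * pd eZ (fun q : E2 => θS q.1 q.2) r := by
    funext q
    simp only [Prod.snd_sub, Prod.smul_snd, smul_eq_mul, grad]
    rw [dsp_pd_ez rfl dTH q.1 q.2, Prod.mk.eta]
  have dQf : Differentiable ℝ (fun q : E2 => (D q.1 q.2)⁻¹
      * (pd eX (fun r : E2 => s * (a r.1 r.2).2
          - mT r.1 r.2 * pd eZ (fun q : E2 => θS q.1 q.2) r) q
        - pd eZ (fun r : E2 => s * (a r.1 r.2).1
          - mT r.1 r.2 * pd eX (fun q : E2 => θS q.1 q.2) r) q)) :=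
    (dDj.inv fun q => ne_of_gt (hDpos q.1 q.2)).mul
      (((pd_smooth eX hW2s).differentiable (by simp)).sub
        ((pd_smooth eZ hW1s).differentiable (by simp)))
  have hFGQ : (fun q : E2 => (D q.1 q.2)⁻¹ *
      (dsp (fun z σ => (s • a z σ - mT z σ • grad θS z σ).2) q.1 q.2 ex
        - dsp (fun z σ => (s • a z σ - mT z σ • grad θS z σ).1) q.1 q.2 ez))
      = fun q : E2 => (D q.1 q.2)⁻¹
      * (pd eX (fun r : E2 => s * (a r.1 r.2).2
          - mT r.1 r.2 * pd eZ (fun q : E2 => θS q.1 q.2) r) q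
        - pd eZ (fun r : E2 => s * (a r.1 r.2).1
          - mT r.1 r.2 * pd eX (fun q : E2 => θS q.1 q.2) r) q) := by
    funext q
    rw [dsp_pd_ex (g := fun z σ => (s • a z σ - mT z σ • grad θS z σ).2) hFG2 dW2 q.1 q.2,
      dsp_pd_ez (g := fun z σ => (s • a z σ - mT z σ • grad θS z σ).1) hFG1 dW1 q.1 q.2,
      Prod.mk.eta]
  rw [pt_pd (g := fun y τ => (D y τ)⁻¹ *
      (dsp (fun z σ => (s • a z σ - mT z σ • grad θS z σ).2) y τ ex
        - dsp (fun z σ => (s • a z σ - mT z σ • grad θS z σ).1) y τ ez)) hFGQ dQf x t,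
    dsp_pd_v (g := fun y τ => (D y τ)⁻¹ *
      (dsp (fun z σ => (s • a z σ - mT z σ • grad θS z σ).2) y τ ex
        - dsp (fun z σ => (s • a z σ - mT z σ • grad θS z σ).1) y τ ez)) hFGQ dQf x t
      (uS x t)]
  exact PVinfra.key s (fun q : E2 => (a q.1 q.2).1) (fun q : E2 => (a q.1 q.2).2)
    (fun q : E2 => (uS q.1 q.2).1) (fun q : E2 => (uS q.1 q.2).2)
    (fun q : E2 => mT q.1 q.2) (fun q : E2 => b q.1 q.2) (fun q : E2 => c q.1 q.2)
    (fun q : E2 => θS q.1 q.2) (fun q : E2 => uT q.1 q.2) (fun q : E2 => D q.1 q.2)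
    hA1 hA2 hU1 hU2 hMTj hBj hCj hTHj hUTj hDj hDpos' e1 e2 e3 e4 e5 (x, t)

end PVbridge

/-- Potential vorticity conservation for slice Euler–Poincaré equations: under
(i)  `∂_t a + u_S·∇a + (∇u_S)ᵀa + m_T ∇u_T + b ∇θ_S − ∇c = 0`,
(ii) `∂_t m_T + u_S·∇m_T + s·b = 0`,
(iii) `∂_t θ_S + u_S·∇θ_S + s·u_T = 0`,
(iv) `∂_t D + div(D u_S) = 0`, `D > 0`,
the potential vorticity `q = (1/D)(∂_x V₂ − ∂_z V₁)`, `V = s·a − m_T ∇θ_S`,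
satisfies `∂_t q + u_S·∇q = 0`. -/
theorem slice_potential_vorticity_conservation
    (s : ℝ) (a uS : (ℝ × ℝ) → ℝ → ℝ × ℝ)
    (mT b c θS uT D : (ℝ × ℝ) → ℝ → ℝ)
    (ha : Smooth2 a) (huS : Smooth2 uS) (hmT : Smooth2 mT) (hb : Smooth2 b)
    (hc : Smooth2 c) (hθS : Smooth2 θS) (huT : Smooth2 uT) (hD : Smooth2 D)
    (hDpos : ∀ x t, 0 < D x t)
    (hi : ∀ x t, pt a x t + dsp a x t (uS x t) + gradT uS a x t
      + mT x t • grad uT x t + b x t • grad θS x t - grad c x t = 0)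
    (hii : ∀ x t, pt mT x t + dsp mT x t (uS x t) + s * b x t = 0)
    (hiii : ∀ x t, pt θS x t + dsp θS x t (uS x t) + s * uT x t = 0)
    (hiv : ∀ x t, pt D x t + div2 (fun y τ => D y τ • uS y τ) x t = 0) :
    ∀ (x : ℝ × ℝ) (t : ℝ),
      pt (fun y τ => (D y τ)⁻¹ *
          (dsp (fun z σ => (s • a z σ - mT z σ • grad θS z σ).2) y τ ex
            - dsp (fun z σ => (s • a z σ - mT z σ • grad θS z σ).1) y τ ez)) x t
        + dsp (fun y τ => (D y τ)⁻¹ *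
            (dsp (fun z σ => (s • a z σ - mT z σ • grad θS z σ).2) y τ ex
              - dsp (fun z σ => (s • a z σ - mT z σ • grad θS z σ).1) y τ ez)) x t
            (uS x t) = 0 := by
  exact PVbridge.main_aux s a uS mT b c θS uT D ha huS hmT hb hc hθS huT hD hDpos hi hii hiii hiv
end
end

section
/- Let f, g, θ₀, H ∈ ℝ with θ₀ ≠ 0, s ∈ ℝ, and let u_S : ℝ² × ℝ → ℝ², u_T, θ_S, p : ℝ² × ℝ → ℝ be smooth solutions of the Euler–Boussinesq vertical slice equations: ∂_t u_S + u_S·∇u_S − f u_T x̂ = −∇p + (g/θ₀) θ_S ẑ; ∂_t u_T + u_S·∇u_T + f (u_S·x̂) = −(g/θ₀)(z − H/2) s; div u_S = 0; ∂_t θ_S + u_S·∇θ_S + u_T s = 0. Then the potential vorticity q := ∂_x W₂ − ∂_z W₁, where W := s·u_S − (u_T + f·x)∇θ_S, satisfies ∂_t q + u_S·∇q = 0 on ℝ² × ℝ. -/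
abbrev E3 : Type := (ℝ × ℝ) × ℝ
noncomputable def DD (v : E3) (F : E3 → ℝ) : E3 → ℝ := fun p => fderiv ℝ F p v

def vX : E3 := ((1, 0), 0)
def vZ : E3 := ((0, 1), 0)
def vT : E3 := ((0, 0), 1)

theorem vX11 : vX.1.1 = 1 := rfl
theorem vZ11 : vZ.1.1 = 0 := rfl
theorem vX12 : vX.1.2 = 0 := rfl
theorem vZ12 : vZ.1.2 = 1 := rfl

theorem contDiff_DD {F : E3 → ℝ} (hF : ContDiff ℝ (⊤ : ℕ∞) F) (v : E3) :
    ContDiff ℝ (⊤ : ℕ∞) (DD v F) :=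
  (hF.fderiv_right (by simp)).clm_apply contDiff_const

theorem diff_DD {F : E3 → ℝ} (hF : ContDiff ℝ (⊤ : ℕ∞) F) (v : E3) :
    Differentiable ℝ (DD v F) := (contDiff_DD hF v).differentiable (by simp)

theorem DD_swap {F : E3 → ℝ} (hF : ContDiff ℝ (⊤ : ℕ∞) F) (v w : E3) (x : E3) :
    DD w (DD v F) x = DD v (DD w F) x := by
  have hd : Differentiable ℝ (fderiv ℝ F) :=
    (hF.fderiv_right (m := (⊤ : ℕ∞)) (by simp)).differentiable (by simp)
  have key : ∀ a b : E3, DD b (DD a F) x = fderiv ℝ (fderiv ℝ F) x b a := by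
    intro a b
    show fderiv ℝ (fun p => fderiv ℝ F p a) x b = _
    rw [fderiv_clm_apply (hd x) (differentiableAt_const a)]
    simp
  rw [key v w, key w v]
  exact (hF.contDiffAt.isSymmSndFDerivAt (by rw [minSmoothness_of_isRCLikeNormedField]; exact WithTop.coe_le_coe.mpr (le_top : (2 : ℕ∞) ≤ ⊤))).eq w v

theorem DD_const (c : ℝ) (v x) : DD v (fun _ : E3 => c) x = 0 := by
  show fderiv ℝ _ x v = _; simp

/-- CLM for first coordinate. -/
noncomputable def L11 : E3 →L[ℝ] ℝ :=
  (ContinuousLinearMap.fst ℝ ℝ ℝ).comp (ContinuousLinearMap.fst ℝ (ℝ × ℝ) ℝ)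
noncomputable def L12 : E3 →L[ℝ] ℝ :=
  (ContinuousLinearMap.snd ℝ ℝ ℝ).comp (ContinuousLinearMap.fst ℝ (ℝ × ℝ) ℝ)

theorem L11_apply (v : E3) : L11 v = v.1.1 := rfl
theorem L12_apply (v : E3) : L12 v = v.1.2 := rfl

/-- The common shape of the PDE residual functions. -/
noncomputable def shp (A B C D E F G : E3 → ℝ) (c1 c2 c3 : ℝ) : E3 → ℝ :=
  fun q => A q + B q * C q + D q * E q + c1 * F q + G q + c2 * q.1.2 + c3

theorem DD_shp {A B C D E F G : E3 → ℝ}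
    (hA : Differentiable ℝ A) (hB : Differentiable ℝ B) (hC : Differentiable ℝ C)
    (hD : Differentiable ℝ D) (hE : Differentiable ℝ E) (hF : Differentiable ℝ F)
    (hG : Differentiable ℝ G) (c1 c2 c3 : ℝ) (v q : E3) :
    DD v (shp A B C D E F G c1 c2 c3) q
      = DD v A q + (B q * DD v C q + C q * DD v B q)
        + (D q * DD v E q + E q * DD v D q)
        + c1 * DD v F q + DD v G q + c2 * v.1.2 := by
  have h12 : HasFDerivAt (fun r : E3 => r.1.2) L12 q := L12.hasFDerivAt
  have hder : HasFDerivAt (shp A B C D E F G c1 c2 c3)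
      (fderiv ℝ A q + (B q • fderiv ℝ C q + C q • fderiv ℝ B q)
        + (D q • fderiv ℝ E q + E q • fderiv ℝ D q)
        + c1 • fderiv ℝ F q + fderiv ℝ G q + c2 • L12) q := by
    have := (((((hA q).hasFDerivAt.add
        ((hB q).hasFDerivAt.mul (hC q).hasFDerivAt)).add
        ((hD q).hasFDerivAt.mul (hE q).hasFDerivAt)).add
        ((hF q).hasFDerivAt.const_mul c1)).add
        (hG q).hasFDerivAt).add (h12.const_mul c2)
    exact this.add_const c3
  show fderiv ℝ _ q v = _
  rw [hder.fderiv]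
  simp only [ContinuousLinearMap.add_apply, ContinuousLinearMap.coe_smul',
    Pi.smul_apply, smul_eq_mul, L12_apply]
  show _ = fderiv ℝ A q v + (B q * fderiv ℝ C q v + C q * fderiv ℝ B q v)
        + (D q * fderiv ℝ E q v + E q * fderiv ℝ D q v)
        + c1 * fderiv ℝ F q v + fderiv ℝ G q v + c2 * v.1.2
  ring

theorem shp_zero_DD {A B C D E F G : E3 → ℝ} {c1 c2 c3 : ℝ}
    (h : ∀ q, shp A B C D E F G c1 c2 c3 q = 0) (v q : E3) :
    DD v (shp A B C D E F G c1 c2 c3) q = 0 := by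
  have h0 : shp A B C D E F G c1 c2 c3 = fun _ => (0 : ℝ) := funext h
  rw [h0]; exact DD_const 0 v q

/-- The potential vorticity as a function of the 3D fields. -/
noncomputable def qshp (U1 U2 UT Θ : E3 → ℝ) (f s : ℝ) : E3 → ℝ :=
  fun q => s * DD vX U2 q - s * DD vZ U1 q - (DD vX UT q + f) * DD vZ Θ q
    + DD vZ UT q * DD vX Θ q

theorem DD_qshp {U1 U2 UT Θ : E3 → ℝ}
    (hU1 : ContDiff ℝ (⊤ : ℕ∞) U1) (hU2 : ContDiff ℝ (⊤ : ℕ∞) U2)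
    (hUT : ContDiff ℝ (⊤ : ℕ∞) UT) (hΘ : ContDiff ℝ (⊤ : ℕ∞) Θ) (f s : ℝ) (v q : E3) :
    DD v (qshp U1 U2 UT Θ f s) q
      = s * DD v (DD vX U2) q - s * DD v (DD vZ U1) q
        - (DD v (DD vX UT) q * DD vZ Θ q + (DD vX UT q + f) * DD v (DD vZ Θ) q)
        + (DD v (DD vZ UT) q * DD vX Θ q + DD vZ UT q * DD v (DD vX Θ) q) := by
  have hder : HasFDerivAt (qshp U1 U2 UT Θ f s)
      ((s • fderiv ℝ (DD vX U2) q - s • fderiv ℝ (DD vZ U1) q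
        - ((DD vX UT q + f) • fderiv ℝ (DD vZ Θ) q + DD vZ Θ q • fderiv ℝ (DD vX UT) q))
        + (DD vZ UT q • fderiv ℝ (DD vX Θ) q + DD vX Θ q • fderiv ℝ (DD vZ UT) q)) q := by
    have h1 := ((diff_DD hU2 vX) q).hasFDerivAt.const_mul s
    have h2 := ((diff_DD hU1 vZ) q).hasFDerivAt.const_mul s
    have h3 := (((diff_DD hUT vX) q).hasFDerivAt.add_const f).mul
      ((diff_DD hΘ vZ) q).hasFDerivAt
    have h4 := ((diff_DD hUT vZ) q).hasFDerivAt.mul ((diff_DD hΘ vX) q).hasFDerivAt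
    exact ((h1.sub h2).sub h3).add h4
  show fderiv ℝ _ q v = _
  rw [hder.fderiv]
  simp only [ContinuousLinearMap.add_apply, ContinuousLinearMap.sub_apply,
    ContinuousLinearMap.coe_smul', Pi.smul_apply, smul_eq_mul]
  show _ = s * fderiv ℝ (DD vX U2) q v - s * fderiv ℝ (DD vZ U1) q v
        - (fderiv ℝ (DD vX UT) q v * DD vZ Θ q + (DD vX UT q + f) * fderiv ℝ (DD vZ Θ) q v)
        + (fderiv ℝ (DD vZ UT) q v * DD vX Θ q + DD vZ UT q * fderiv ℝ (DD vX Θ) q v)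
  ring

theorem aux_pv (f gθ s c3 : ℝ) {U1 U2 UT Θ P : E3 → ℝ}
    (hU1 : ContDiff ℝ (⊤ : ℕ∞) U1) (hU2 : ContDiff ℝ (⊤ : ℕ∞) U2) (hUT : ContDiff ℝ (⊤ : ℕ∞) UT)
    (hΘ : ContDiff ℝ (⊤ : ℕ∞) Θ) (hP : ContDiff ℝ (⊤ : ℕ∞) P)
    (e1 : ∀ q, shp (DD vT U1) U1 (DD vX U1) U2 (DD vZ U1) UT (DD vX P) (-f) 0 0 q = 0)
    (e2 : ∀ q, shp (DD vT U2) U1 (DD vX U2) U2 (DD vZ U2) Θ (DD vZ P) (-gθ) 0 0 q = 0)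
    (e3 : ∀ q, shp (DD vT UT) U1 (DD vX UT) U2 (DD vZ UT) U1 (fun _ => 0) f (gθ * s) c3 q = 0)
    (e4 : ∀ q, shp (DD vX U1) (fun _ => 0) (fun _ => 0) (fun _ => 0) (fun _ => 0)
        (fun _ => 0) (DD vZ U2) 0 0 0 q = 0)
    (e5 : ∀ q, shp (DD vT Θ) U1 (DD vX Θ) U2 (DD vZ Θ) UT (fun _ => 0) s 0 0 q = 0) :
    ∀ q, DD vT (qshp U1 U2 UT Θ f s) q + U1 q * DD vX (qshp U1 U2 UT Θ f s) q
      + U2 q * DD vZ (qshp U1 U2 UT Θ f s) q = 0 := by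
  intro q
  have dU1 := (hU1.differentiable (by simp))
  have dU2 := (hU2.differentiable (by simp))
  have dUT := (hUT.differentiable (by simp))
  have dΘ := (hΘ.differentiable (by simp))
  have d0 : Differentiable ℝ (fun _ : E3 => (0:ℝ)) := differentiable_const 0
  -- differentiated residuals
  have h1z := (shp_zero_DD e1 vZ q).symm.trans (DD_shp (diff_DD hU1 vT) dU1
    (diff_DD hU1 vX) dU2 (diff_DD hU1 vZ) dUT (diff_DD hP vX) (-f) 0 0 vZ q)
  have h2x := (shp_zero_DD e2 vX q).symm.trans (DD_shp (diff_DD hU2 vT) dU1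
    (diff_DD hU2 vX) dU2 (diff_DD hU2 vZ) dΘ (diff_DD hP vZ) (-gθ) 0 0 vX q)
  have h3x := (shp_zero_DD e3 vX q).symm.trans (DD_shp (diff_DD hUT vT) dU1
    (diff_DD hUT vX) dU2 (diff_DD hUT vZ) dU1 d0 f (gθ * s) c3 vX q)
  have h3z := (shp_zero_DD e3 vZ q).symm.trans (DD_shp (diff_DD hUT vT) dU1
    (diff_DD hUT vX) dU2 (diff_DD hUT vZ) dU1 d0 f (gθ * s) c3 vZ q)
  have h5x := (shp_zero_DD e5 vX q).symm.trans (DD_shp (diff_DD hΘ vT) dU1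
    (diff_DD hΘ vX) dU2 (diff_DD hΘ vZ) dUT d0 s 0 0 vX q)
  have h5z := (shp_zero_DD e5 vZ q).symm.trans (DD_shp (diff_DD hΘ vT) dU1
    (diff_DD hΘ vX) dU2 (diff_DD hΘ vZ) dUT d0 s 0 0 vZ q)
  have h40 : DD vX U1 q + DD vZ U2 q = 0 := by
    have := e4 q
    simp only [shp] at this
    linarith
  -- canonicalize second derivatives
  rw [DD_swap hU1 vT vZ q, DD_swap hU1 vX vZ q, DD_swap hP vX vZ q] at h1z
  rw [DD_swap hU2 vT vX q] at h2x
  rw [DD_swap hUT vT vX q] at h3x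
  rw [DD_swap hUT vT vZ q, DD_swap hUT vX vZ q] at h3z
  rw [DD_swap hΘ vT vX q] at h5x
  rw [DD_swap hΘ vT vZ q, DD_swap hΘ vX vZ q] at h5z
  simp only [DD_const, vX12, vZ12] at h1z h2x h3x h3z h5x h5z
  -- expand the goal
  rw [DD_qshp hU1 hU2 hUT hΘ f s vT q, DD_qshp hU1 hU2 hUT hΘ f s vX q,
    DD_qshp hU1 hU2 hUT hΘ f s vZ q]
  rw [DD_swap hU2 vX vZ q, DD_swap hUT vX vZ q, DD_swap hΘ vX vZ q]
  linear_combination (-s) * h2x + s * h1z + DD vZ Θ q * h3x - DD vX Θ q * h3z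
    + (DD vX UT q + f) * h5z - DD vZ UT q * h5x
    - (s * DD vX U2 q - s * DD vZ U1 q - (DD vX UT q + f) * DD vZ Θ q
        + DD vZ UT q * DD vX Θ q) * h40

theorem pt_eq_s10 {α : Type*} [NormedAddCommGroup α] [NormedSpace ℝ α]
    (g : (ℝ × ℝ) → ℝ → α) (x : ℝ × ℝ) (t : ℝ)
    (h : DifferentiableAt ℝ (fun p : (ℝ × ℝ) × ℝ => g p.1 p.2) (x, t)) :
    pt g x t = fderiv ℝ (fun p : (ℝ × ℝ) × ℝ => g p.1 p.2) (x, t) (0, 1) := by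
  have hι : HasFDerivAt (fun τ : ℝ => ((x, τ) : (ℝ × ℝ) × ℝ))
      ((0 : ℝ →L[ℝ] ℝ × ℝ).prod (ContinuousLinearMap.id ℝ ℝ)) t :=
    (hasFDerivAt_const x t).prodMk (hasFDerivAt_id t)
  have hc := (h.hasFDerivAt.comp t hι).hasDerivAt
  have : pt g x t = fderiv ℝ (fun p : (ℝ × ℝ) × ℝ => g p.1 p.2) (x, t)
      (((0 : ℝ →L[ℝ] ℝ × ℝ).prod (ContinuousLinearMap.id ℝ ℝ)) 1) := hc.deriv
  simpa using this

theorem dsp_eq_s10 {α : Type*} [NormedAddCommGroup α] [NormedSpace ℝ α]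
    (g : (ℝ × ℝ) → ℝ → α) (x : ℝ × ℝ) (t : ℝ) (v : ℝ × ℝ)
    (h : DifferentiableAt ℝ (fun p : (ℝ × ℝ) × ℝ => g p.1 p.2) (x, t)) :
    dsp g x t v = fderiv ℝ (fun p : (ℝ × ℝ) × ℝ => g p.1 p.2) (x, t) (v, 0) := by
  have hι : HasFDerivAt (fun y : ℝ × ℝ => ((y, t) : (ℝ × ℝ) × ℝ))
      ((ContinuousLinearMap.id ℝ (ℝ × ℝ)).prod (0 : ℝ × ℝ →L[ℝ] ℝ)) x :=
    (hasFDerivAt_id x).prodMk (hasFDerivAt_const t x)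
  have hc := (h.hasFDerivAt.comp x hι).fderiv
  have : dsp g x t v = fderiv ℝ (fun p : (ℝ × ℝ) × ℝ => g p.1 p.2) (x, t)
      (((ContinuousLinearMap.id ℝ (ℝ × ℝ)).prod (0 : ℝ × ℝ →L[ℝ] ℝ)) v) := by
    rw [dsp, show (fun y : ℝ × ℝ => g y t) = ((fun p : (ℝ × ℝ) × ℝ => g p.1 p.2) ∘ fun y : ℝ × ℝ => (y, t)) from rfl, hc]; rfl
  simpa using this

theorem fderiv_fst_comp {U : E3 → ℝ × ℝ} {q : E3} (h : DifferentiableAt ℝ U q) (w : E3) :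
    (fderiv ℝ U q w).1 = fderiv ℝ (fun r => (U r).1) q w := by
  have : fderiv ℝ (fun r => (U r).1) q
      = (ContinuousLinearMap.fst ℝ ℝ ℝ).comp (fderiv ℝ U q) := by
    rw [show (fun r : E3 => (U r).1) = (Prod.fst ∘ U) from rfl,
      fderiv_comp q differentiableAt_fst h, fderiv_fst]
  rw [this]; rfl

theorem fderiv_snd_comp {U : E3 → ℝ × ℝ} {q : E3} (h : DifferentiableAt ℝ U q) (w : E3) :
    (fderiv ℝ U q w).2 = fderiv ℝ (fun r => (U r).2) q w := by
  have : fderiv ℝ (fun r => (U r).2) q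
      = (ContinuousLinearMap.snd ℝ ℝ ℝ).comp (fderiv ℝ U q) := by
    rw [show (fun r : E3 => (U r).2) = (Prod.snd ∘ U) from rfl,
      fderiv_comp q differentiableAt_snd h, fderiv_snd]
  rw [this]; rfl

theorem dir_decomp (F : E3 → ℝ) (q : E3) (v : ℝ × ℝ) :
    fderiv ℝ F q ((v, 0) : E3) = v.1 * DD vX F q + v.2 * DD vZ F q := by
  have hv : ((v, (0:ℝ)) : E3) = v.1 • vX + v.2 • vZ := by
    simp [vX, vZ, Prod.ext_iff]
  rw [hv, map_add, map_smul, map_smul]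
  simp [DD, smul_eq_mul]

/-- Expansion of the derivative of the W-components. -/
theorem DD_W {F G H : E3 → ℝ} (hF : Differentiable ℝ F) (hG : Differentiable ℝ G)
    (hH : Differentiable ℝ H) (c k : ℝ) (v q : E3) :
    DD v (fun r => c * F r - (G r + k * r.1.1) * H r) q
      = c * DD v F q - ((DD v G q + k * v.1.1) * H q
          + (G q + k * q.1.1) * DD v H q) := by
  have h11 : HasFDerivAt (fun r : E3 => r.1.1) L11 q := L11.hasFDerivAt
  have hder : HasFDerivAt (fun r => c * F r - (G r + k * r.1.1) * H r)
      (c • fderiv ℝ F q - ((G q + k * q.1.1) • fderiv ℝ H q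
        + H q • (fderiv ℝ G q + k • L11))) q := by
    have hGk : HasFDerivAt (fun r : E3 => G r + k * r.1.1)
        (fderiv ℝ G q + k • L11) q := (hG q).hasFDerivAt.add (h11.const_mul k)
    exact ((hF q).hasFDerivAt.const_mul c).sub (hGk.mul (hH q).hasFDerivAt)
  show fderiv ℝ _ q v = _
  rw [hder.fderiv]
  simp only [ContinuousLinearMap.add_apply, ContinuousLinearMap.sub_apply,
    ContinuousLinearMap.coe_smul', Pi.smul_apply, smul_eq_mul, L11_apply]
  show _ = c * fderiv ℝ F q v - ((fderiv ℝ G q v + k * v.1.1) * H q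
      + (G q + k * q.1.1) * fderiv ℝ H q v)
  ring
/- ===== auxiliary definitions for the main theorem ===== -/

noncomputable def U1E (uS : (ℝ × ℝ) → ℝ → ℝ × ℝ) : E3 → ℝ := fun q => (uS q.1 q.2).1
noncomputable def U2E (uS : (ℝ × ℝ) → ℝ → ℝ × ℝ) : E3 → ℝ := fun q => (uS q.1 q.2).2
noncomputable def SF (h : (ℝ × ℝ) → ℝ → ℝ) : E3 → ℝ := fun q => h q.1 q.2

noncomputable def W2E (uS : (ℝ × ℝ) → ℝ → ℝ × ℝ) (uT θS : (ℝ × ℝ) → ℝ → ℝ) (f s : ℝ) :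
    E3 → ℝ := fun q => s * U2E uS q - (SF uT q + f * q.1.1) * DD vZ (SF θS) q
noncomputable def W1E (uS : (ℝ × ℝ) → ℝ → ℝ × ℝ) (uT θS : (ℝ × ℝ) → ℝ → ℝ) (f s : ℝ) :
    E3 → ℝ := fun q => s * U1E uS q - (SF uT q + f * q.1.1) * DD vX (SF θS) q
noncomputable def QWE (uS : (ℝ × ℝ) → ℝ → ℝ × ℝ) (uT θS : (ℝ × ℝ) → ℝ → ℝ) (f s : ℝ) :
    E3 → ℝ := fun q => DD vX (W2E uS uT θS f s) q - DD vZ (W1E uS uT θS f s) q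
/-- Potential vorticity conservation for the Euler–Boussinesq vertical slice equations:
the potential vorticity `q = ∂_x W₂ − ∂_z W₁` with `W = s·u_S − (u_T + f·x)∇θ_S`
satisfies `∂_t q + u_S·∇q = 0`. -/
theorem eulerBoussinesq_pv_conservation
    (f g θ₀ H s : ℝ) (hθ₀ : θ₀ ≠ 0)
    (uS : (ℝ × ℝ) → ℝ → ℝ × ℝ) (uT θS p : (ℝ × ℝ) → ℝ → ℝ)
    (huS : Smooth2 uS) (huT : Smooth2 uT) (hθS : Smooth2 θS) (hp : Smooth2 p)
    (hmom : ∀ x t, pt uS x t + dsp uS x t (uS x t) - (f * uT x t) • ex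
      = -grad p x t + ((g / θ₀) * θS x t) • ez)
    (htrans : ∀ x t, pt uT x t + dsp uT x t (uS x t) + f * (uS x t).1
      = -((g / θ₀) * (x.2 - H / 2) * s))
    (hdiv : ∀ x t, div2 uS x t = 0)
    (hθ : ∀ x t, pt θS x t + dsp θS x t (uS x t) + uT x t * s = 0) :
    ∀ (x : ℝ × ℝ) (t : ℝ),
      pt (fun y τ =>
          dsp (fun z σ => (s • uS z σ - (uT z σ + f * z.1) • grad θS z σ).2) y τ ex
            - dsp (fun z σ => (s • uS z σ - (uT z σ + f * z.1) • grad θS z σ).1) y τ ez) x t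
        + dsp (fun y τ =>
            dsp (fun z σ => (s • uS z σ - (uT z σ + f * z.1) • grad θS z σ).2) y τ ex
              - dsp (fun z σ => (s • uS z σ - (uT z σ + f * z.1) • grad θS z σ).1) y τ ez) x t
            (uS x t) = 0 := by
  intro x t
  -- smoothness / differentiability
  have hUSc : ContDiff ℝ (⊤ : ℕ∞) (fun q : E3 => uS q.1 q.2) := huS
  have hU1' : ContDiff ℝ (⊤ : ℕ∞) (U1E uS) := contDiff_fst.comp huS
  have hU2' : ContDiff ℝ (⊤ : ℕ∞) (U2E uS) := contDiff_snd.comp huS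
  have hUT' : ContDiff ℝ (⊤ : ℕ∞) (SF uT) := huT
  have hΘ' : ContDiff ℝ (⊤ : ℕ∞) (SF θS) := hθS
  have hP' : ContDiff ℝ (⊤ : ℕ∞) (SF p) := hp
  have dUS : Differentiable ℝ (fun q : E3 => uS q.1 q.2) := hUSc.differentiable (by simp)
  have dU1 : Differentiable ℝ (U1E uS) := hU1'.differentiable (by simp)
  have dU2 : Differentiable ℝ (U2E uS) := hU2'.differentiable (by simp)
  have dUT : Differentiable ℝ (SF uT) := hUT'.differentiable (by simp)
  have dΘ : Differentiable ℝ (SF θS) := hΘ'.differentiable (by simp)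
  have dP : Differentiable ℝ (SF p) := hP'.differentiable (by simp)
  have hW2s : ContDiff ℝ (⊤ : ℕ∞) (W2E uS uT θS f s) :=
    (contDiff_const.mul hU2').sub
      ((hUT'.add (contDiff_const.mul (contDiff_fst.comp contDiff_fst))).mul
        (contDiff_DD hΘ' vZ))
  have hW1s : ContDiff ℝ (⊤ : ℕ∞) (W1E uS uT θS f s) :=
    (contDiff_const.mul hU1').sub
      ((hUT'.add (contDiff_const.mul (contDiff_fst.comp contDiff_fst))).mul
        (contDiff_DD hΘ' vX))
  have dW2 : Differentiable ℝ (W2E uS uT θS f s) := hW2s.differentiable (by simp)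
  have dW1 : Differentiable ℝ (W1E uS uT θS f s) := hW1s.differentiable (by simp)
  have hQs : ContDiff ℝ (⊤ : ℕ∞) (QWE uS uT θS f s) :=
    (contDiff_DD hW2s vX).sub (contDiff_DD hW1s vZ)
  have dQ : Differentiable ℝ (QWE uS uT θS f s) := hQs.differentiable (by simp)
  -- conversions for the momentum components
  have hpt1 : ∀ q : E3, (pt uS q.1 q.2).1 = DD vT (U1E uS) q := by
    intro q
    rw [pt_eq_s10 uS q.1 q.2 (dUS (q.1, q.2))]
    exact (fderiv_fst_comp (dUS (q.1, q.2)) _).trans rfl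
  have hpt2 : ∀ q : E3, (pt uS q.1 q.2).2 = DD vT (U2E uS) q := by
    intro q
    rw [pt_eq_s10 uS q.1 q.2 (dUS (q.1, q.2))]
    exact (fderiv_snd_comp (dUS (q.1, q.2)) _).trans rfl
  have hds1 : ∀ q : E3, (dsp uS q.1 q.2 (uS q.1 q.2)).1
      = (uS q.1 q.2).1 * DD vX (U1E uS) q + (uS q.1 q.2).2 * DD vZ (U1E uS) q := by
    intro q
    rw [dsp_eq_s10 uS q.1 q.2 _ (dUS (q.1, q.2)), fderiv_fst_comp (dUS (q.1, q.2)) _]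
    exact dir_decomp _ _ _
  have hds2 : ∀ q : E3, (dsp uS q.1 q.2 (uS q.1 q.2)).2
      = (uS q.1 q.2).1 * DD vX (U2E uS) q + (uS q.1 q.2).2 * DD vZ (U2E uS) q := by
    intro q
    rw [dsp_eq_s10 uS q.1 q.2 _ (dUS (q.1, q.2)), fderiv_snd_comp (dUS (q.1, q.2)) _]
    exact dir_decomp _ _ _
  -- conversions for scalar fields
  have hptT : ∀ q : E3, pt uT q.1 q.2 = DD vT (SF uT) q := fun q =>
    (pt_eq_s10 uT q.1 q.2 (dUT (q.1, q.2))).trans rfl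
  have hptΘ : ∀ q : E3, pt θS q.1 q.2 = DD vT (SF θS) q := fun q =>
    (pt_eq_s10 θS q.1 q.2 (dΘ (q.1, q.2))).trans rfl
  have hdsT : ∀ q : E3, dsp uT q.1 q.2 (uS q.1 q.2)
      = (uS q.1 q.2).1 * DD vX (SF uT) q + (uS q.1 q.2).2 * DD vZ (SF uT) q := by
    intro q
    rw [dsp_eq_s10 uT q.1 q.2 _ (dUT (q.1, q.2))]
    exact dir_decomp _ _ _
  have hdsΘ : ∀ q : E3, dsp θS q.1 q.2 (uS q.1 q.2)
      = (uS q.1 q.2).1 * DD vX (SF θS) q + (uS q.1 q.2).2 * DD vZ (SF θS) q := by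
    intro q
    rw [dsp_eq_s10 θS q.1 q.2 _ (dΘ (q.1, q.2))]
    exact dir_decomp _ _ _
  have hdsPx : ∀ q : E3, dsp p q.1 q.2 ex = DD vX (SF p) q := fun q =>
    (dsp_eq_s10 p q.1 q.2 ex (dP (q.1, q.2))).trans rfl
  have hdsPz : ∀ q : E3, dsp p q.1 q.2 ez = DD vZ (SF p) q := fun q =>
    (dsp_eq_s10 p q.1 q.2 ez (dP (q.1, q.2))).trans rfl
  have hdvx : ∀ q : E3, dsp (fun y τ => (uS y τ).1) q.1 q.2 ex = DD vX (U1E uS) q := fun q =>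
    (dsp_eq_s10 (fun y τ => (uS y τ).1) q.1 q.2 ex (dU1 (q.1, q.2))).trans rfl
  have hdvz : ∀ q : E3, dsp (fun y τ => (uS y τ).2) q.1 q.2 ez = DD vZ (U2E uS) q := fun q =>
    (dsp_eq_s10 (fun y τ => (uS y τ).2) q.1 q.2 ez (dU2 (q.1, q.2))).trans rfl
  -- the five residual equations
  have e1 : ∀ q : E3, shp (DD vT (U1E uS)) (U1E uS) (DD vX (U1E uS)) (U2E uS)
      (DD vZ (U1E uS)) (SF uT) (DD vX (SF p)) (-f) 0 0 q = 0 := by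
    intro q
    have hm := congrArg Prod.fst (hmom q.1 q.2)
    simp only [Prod.fst_add, Prod.fst_sub, Prod.smul_fst, smul_eq_mul, Prod.fst_neg, grad,
      show ex.1 = (1:ℝ) from rfl, show ez.1 = (0:ℝ) from rfl] at hm
    rw [hpt1 q, hds1 q, hdsPx q] at hm
    show DD vT (U1E uS) q + (uS q.1 q.2).1 * DD vX (U1E uS) q
      + (uS q.1 q.2).2 * DD vZ (U1E uS) q + (-f) * uT q.1 q.2 + DD vX (SF p) q
      + 0 * q.1.2 + 0 = 0
    linear_combination hm
  have e2 : ∀ q : E3, shp (DD vT (U2E uS)) (U1E uS) (DD vX (U2E uS)) (U2E uS)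
      (DD vZ (U2E uS)) (SF θS) (DD vZ (SF p)) (-(g / θ₀)) 0 0 q = 0 := by
    intro q
    have hm := congrArg Prod.snd (hmom q.1 q.2)
    simp only [Prod.snd_add, Prod.snd_sub, Prod.smul_snd, smul_eq_mul, Prod.snd_neg, grad,
      show ex.2 = (0:ℝ) from rfl, show ez.2 = (1:ℝ) from rfl] at hm
    rw [hpt2 q, hds2 q, hdsPz q] at hm
    show DD vT (U2E uS) q + (uS q.1 q.2).1 * DD vX (U2E uS) q
      + (uS q.1 q.2).2 * DD vZ (U2E uS) q + (-(g / θ₀)) * θS q.1 q.2 + DD vZ (SF p) q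
      + 0 * q.1.2 + 0 = 0
    linear_combination hm
  have e3 : ∀ q : E3, shp (DD vT (SF uT)) (U1E uS) (DD vX (SF uT)) (U2E uS)
      (DD vZ (SF uT)) (U1E uS) (fun _ => 0) f (g / θ₀ * s) (-(g / θ₀ * (H / 2) * s)) q
      = 0 := by
    intro q
    have hm := htrans q.1 q.2
    rw [hptT q, hdsT q] at hm
    show DD vT (SF uT) q + (uS q.1 q.2).1 * DD vX (SF uT) q
      + (uS q.1 q.2).2 * DD vZ (SF uT) q + f * (uS q.1 q.2).1 + 0
      + g / θ₀ * s * q.1.2 + -(g / θ₀ * (H / 2) * s) = 0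
    linear_combination hm
  have e4 : ∀ q : E3, shp (DD vX (U1E uS)) (fun _ => 0) (fun _ => 0) (fun _ => 0)
      (fun _ => 0) (fun _ => 0) (DD vZ (U2E uS)) 0 0 0 q = 0 := by
    intro q
    have hm := hdiv q.1 q.2
    rw [div2, hdvx q, hdvz q] at hm
    show DD vX (U1E uS) q + 0 * 0 + 0 * 0 + 0 * 0 + DD vZ (U2E uS) q + 0 * q.1.2 + 0 = 0
    linear_combination hm
  have e5 : ∀ q : E3, shp (DD vT (SF θS)) (U1E uS) (DD vX (SF θS)) (U2E uS)
      (DD vZ (SF θS)) (SF uT) (fun _ => 0) s 0 0 q = 0 := by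
    intro q
    have hm := hθ q.1 q.2
    rw [hptΘ q, hdsΘ q] at hm
    show DD vT (SF θS) q + (uS q.1 q.2).1 * DD vX (SF θS) q
      + (uS q.1 q.2).2 * DD vZ (SF θS) q + s * uT q.1 q.2 + 0 + 0 * q.1.2 + 0 = 0
    linear_combination hm
  -- identify the potential vorticity field
  have hW2fun : (fun z σ => (s • uS z σ - (uT z σ + f * z.1) • grad θS z σ).2)
      = fun z σ => W2E uS uT θS f s (z, σ) := by
    funext z σ
    show (s • uS z σ - (uT z σ + f * z.1) • grad θS z σ).2
      = s * (uS z σ).2 - (uT z σ + f * z.1) * DD vZ (SF θS) (z, σ)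
    simp only [Prod.snd_sub, Prod.smul_snd, smul_eq_mul, grad]
    rw [dsp_eq_s10 θS z σ ez (dΘ (z, σ))]
    rfl
  have hW1fun : (fun z σ => (s • uS z σ - (uT z σ + f * z.1) • grad θS z σ).1)
      = fun z σ => W1E uS uT θS f s (z, σ) := by
    funext z σ
    show (s • uS z σ - (uT z σ + f * z.1) • grad θS z σ).1
      = s * (uS z σ).1 - (uT z σ + f * z.1) * DD vX (SF θS) (z, σ)
    simp only [Prod.fst_sub, Prod.smul_fst, smul_eq_mul, grad]
    rw [dsp_eq_s10 θS z σ ex (dΘ (z, σ))]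
    rfl
  have hBfun : (fun y τ =>
        dsp (fun z σ => (s • uS z σ - (uT z σ + f * z.1) • grad θS z σ).2) y τ ex
          - dsp (fun z σ => (s • uS z σ - (uT z σ + f * z.1) • grad θS z σ).1) y τ ez)
      = fun y τ => QWE uS uT θS f s (y, τ) := by
    funext y τ
    rw [hW2fun, hW1fun, dsp_eq_s10 _ y τ ex (dW2 (y, τ)), dsp_eq_s10 _ y τ ez (dW1 (y, τ))]
    rfl
  have hQq : QWE uS uT θS f s = qshp (U1E uS) (U2E uS) (SF uT) (SF θS) f s := by
    funext q
    show DD vX (fun r => s * U2E uS r - (SF uT r + f * r.1.1) * DD vZ (SF θS) r) q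
        - DD vZ (fun r => s * U1E uS r - (SF uT r + f * r.1.1) * DD vX (SF θS) r) q = _
    rw [DD_W dU2 dUT (diff_DD hΘ' vZ) s f vX q, DD_W dU1 dUT (diff_DD hΘ' vX) s f vZ q,
      vX11, vZ11]
    show _ = s * DD vX (U2E uS) q - s * DD vZ (U1E uS) q
      - (DD vX (SF uT) q + f) * DD vZ (SF θS) q + DD vZ (SF uT) q * DD vX (SF θS) q
    linear_combination (SF uT q + f * q.1.1) * DD_swap hΘ' vX vZ q
  rw [hBfun]
  rw [show pt (fun y τ => QWE uS uT θS f s (y, τ)) x t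
      = DD vT (QWE uS uT θS f s) (x, t) from (pt_eq_s10 _ x t (dQ (x, t))).trans rfl]
  rw [show dsp (fun y τ => QWE uS uT θS f s (y, τ)) x t (uS x t)
      = U1E uS (x, t) * DD vX (QWE uS uT θS f s) (x, t)
        + U2E uS (x, t) * DD vZ (QWE uS uT θS f s) (x, t) from by
    rw [dsp_eq_s10 _ x t _ (dQ (x, t))]; exact dir_decomp _ _ _]
  rw [hQq]
  have hfin := aux_pv f (g / θ₀) s (-(g / θ₀ * (H / 2) * s)) hU1' hU2' hUT' hΘ' hP'
    e1 e2 e3 e4 e5 (x, t)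
  linear_combination hfin
end

section
/- Let f, g, θ₀, H ∈ ℝ with θ₀ ≠ 0, s ∈ ℝ, and let u_S : ℝ² × ℝ → ℝ², u_T, θ_S, p : ℝ² × ℝ → ℝ be smooth solutions of the Euler–Boussinesq vertical slice equations (∂_t u_S + u_S·∇u_S − f u_T x̂ = −∇p + (g/θ₀)θ_S ẑ; ∂_t u_T + u_S·∇u_T + f(u_S·x̂) = −(g/θ₀)(z−H/2)s; div u_S = 0; ∂_t θ_S + u_S·∇θ_S + u_T s = 0). Let φ : ℝ² × ℝ → ℝ² be smooth with ∂_t φ(X,t) = u_S(φ(X,t),t), and let γ : ℝ → ℝ² be smooth with γ(σ+1) = γ(σ). Then the circulation t ↦ ∫₀¹ [s·u_S − (u_T + f·x)∇θ_S](φ(γ(σ),t),t) · ∂_σ[φ(γ(σ),t)] dσ is constant in t. -/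
/-! ### generic partial-derivative layer -/

noncomputable def pd1 {α : Type*} [NormedAddCommGroup α] [NormedSpace ℝ α]
    (k : ℝ × ℝ → α) (q : ℝ × ℝ) : α := fderiv ℝ k q (1, 0)
noncomputable def pd2 {α : Type*} [NormedAddCommGroup α] [NormedSpace ℝ α]
    (k : ℝ × ℝ → α) (q : ℝ × ℝ) : α := fderiv ℝ k q (0, 1)

section generic
variable {α : Type*} [NormedAddCommGroup α] [NormedSpace ℝ α]

lemma hasDerivAt_pd1 {k : ℝ × ℝ → α} (hk : ContDiff ℝ (⊤ : ℕ∞) k) (σ t : ℝ) :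
    HasDerivAt (fun x => k (x, t)) (pd1 k (σ, t)) σ := by
  have h1 : HasFDerivAt k (fderiv ℝ k (σ, t)) (σ, t) :=
    (hk.differentiable (by simp) (σ, t)).hasFDerivAt
  have h2 : HasDerivAt (fun x : ℝ => (x, t)) ((1 : ℝ), (0 : ℝ)) σ :=
    (hasDerivAt_id σ).prodMk (hasDerivAt_const σ t)
  exact h1.comp_hasDerivAt σ h2

lemma hasDerivAt_pd2 {k : ℝ × ℝ → α} (hk : ContDiff ℝ (⊤ : ℕ∞) k) (σ t : ℝ) :
    HasDerivAt (fun y => k (σ, y)) (pd2 k (σ, t)) t := by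
  have h1 : HasFDerivAt k (fderiv ℝ k (σ, t)) (σ, t) :=
    (hk.differentiable (by simp) (σ, t)).hasFDerivAt
  have h2 : HasDerivAt (fun y : ℝ => (σ, y)) ((0 : ℝ), (1 : ℝ)) t :=
    (hasDerivAt_const t σ).prodMk (hasDerivAt_id t)
  exact h1.comp_hasDerivAt t h2

lemma contDiff_pd1 {k : ℝ × ℝ → α} (hk : ContDiff ℝ (⊤ : ℕ∞) k) : ContDiff ℝ (⊤ : ℕ∞) (pd1 k) :=
  (hk.fderiv_right (by simp)).clm_apply contDiff_const

lemma pd_comm {k : ℝ × ℝ → α} (hk : ContDiff ℝ (⊤ : ℕ∞) k) (q : ℝ × ℝ) :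
    pd2 (pd1 k) q = pd1 (pd2 k) q := by
  have hsymm : fderiv ℝ (fderiv ℝ k) q (0, 1) (1, 0)
      = fderiv ℝ (fderiv ℝ k) q (1, 0) (0, 1) :=
    (hk.contDiffAt.isSymmSndFDerivAt (by rw [minSmoothness_of_isRCLikeNormedField]; exact WithTop.coe_le_coe.mpr le_top)) _ _
  have hdf : HasFDerivAt (fderiv ℝ k) (fderiv ℝ (fderiv ℝ k) q) q :=
    (((hk.fderiv_right (m := (⊤ : ℕ∞)) (by simp)).differentiable (by simp)) q).hasFDerivAt
  have h1 : HasFDerivAt (pd1 k)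
      ((ContinuousLinearMap.apply ℝ α ((1 : ℝ), (0 : ℝ))).comp (fderiv ℝ (fderiv ℝ k) q)) q :=
    (ContinuousLinearMap.apply ℝ α ((1 : ℝ), (0 : ℝ))).hasFDerivAt.comp q hdf
  have h2 : HasFDerivAt (pd2 k)
      ((ContinuousLinearMap.apply ℝ α ((0 : ℝ), (1 : ℝ))).comp (fderiv ℝ (fderiv ℝ k) q)) q :=
    (ContinuousLinearMap.apply ℝ α ((0 : ℝ), (1 : ℝ))).hasFDerivAt.comp q hdf
  calc pd2 (pd1 k) q = fderiv ℝ (pd1 k) q (0, 1) := rfl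
    _ = fderiv ℝ (fderiv ℝ k) q (0, 1) (1, 0) := by rw [h1.fderiv]; rfl
    _ = fderiv ℝ (fderiv ℝ k) q (1, 0) (0, 1) := hsymm
    _ = fderiv ℝ (pd2 k) q (1, 0) := by rw [h2.fderiv]; rfl
    _ = pd1 (pd2 k) q := rfl

lemma dsp_eq_joint {g : (ℝ × ℝ) → ℝ → α} (hg : Smooth2 g) (x : ℝ × ℝ) (t : ℝ) (v : ℝ × ℝ) :
    dsp g x t v = fderiv ℝ (fun pr : (ℝ × ℝ) × ℝ => g pr.1 pr.2) (x, t) (v, 0) := by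
  have h1 : HasFDerivAt (fun pr : (ℝ × ℝ) × ℝ => g pr.1 pr.2)
      (fderiv ℝ (fun pr : (ℝ × ℝ) × ℝ => g pr.1 pr.2) (x, t)) (x, t) :=
    (hg.differentiable (by simp) (x, t)).hasFDerivAt
  have h2 : HasFDerivAt (fun y : ℝ × ℝ => (y, t))
      ((ContinuousLinearMap.id ℝ (ℝ × ℝ)).prod 0) x :=
    (hasFDerivAt_id x).prodMk (hasFDerivAt_const t x)
  have h3 : HasFDerivAt (fun y => g y t)
      ((fderiv ℝ (fun pr : (ℝ × ℝ) × ℝ => g pr.1 pr.2) (x, t)).comp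
        ((ContinuousLinearMap.id ℝ (ℝ × ℝ)).prod 0)) x := by have := h1.comp x h2; exact this
  have : dsp g x t v = ((fderiv ℝ (fun pr : (ℝ × ℝ) × ℝ => g pr.1 pr.2) (x, t)).comp
      ((ContinuousLinearMap.id ℝ (ℝ × ℝ)).prod 0)) v := by
    unfold dsp; rw [h3.fderiv]
  simpa using this

lemma pt_eq_joint {g : (ℝ × ℝ) → ℝ → α} (hg : Smooth2 g) (x : ℝ × ℝ) (t : ℝ) :
    pt g x t = fderiv ℝ (fun pr : (ℝ × ℝ) × ℝ => g pr.1 pr.2) (x, t) (0, 1) := by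
  have h1 : HasFDerivAt (fun pr : (ℝ × ℝ) × ℝ => g pr.1 pr.2)
      (fderiv ℝ (fun pr : (ℝ × ℝ) × ℝ => g pr.1 pr.2) (x, t)) (x, t) :=
    (hg.differentiable (by simp) (x, t)).hasFDerivAt
  have h2 : HasDerivAt (fun τ : ℝ => (x, τ)) (((0 : ℝ × ℝ)), (1 : ℝ)) t :=
    (hasDerivAt_const t x).prodMk (hasDerivAt_id t)
  have h3 : HasDerivAt (fun τ => g x τ)
      (fderiv ℝ (fun pr : (ℝ × ℝ) × ℝ => g pr.1 pr.2) (x, t) ((0 : ℝ × ℝ), 1)) t :=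
    h1.comp_hasDerivAt t h2
  exact h3.deriv

lemma contDiff_comp2 {g : (ℝ × ℝ) → ℝ → α} (hg : Smooth2 g) {c : ℝ × ℝ → ℝ × ℝ}
    (hc : ContDiff ℝ (⊤ : ℕ∞) c) : ContDiff ℝ (⊤ : ℕ∞) (fun q : ℝ × ℝ => g (c q) q.2) :=
  hg.comp (hc.prodMk contDiff_snd)

lemma pd1_comp2 {g : (ℝ × ℝ) → ℝ → α} (hg : Smooth2 g) {c : ℝ × ℝ → ℝ × ℝ}
    (hc : ContDiff ℝ (⊤ : ℕ∞) c) (q : ℝ × ℝ) :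
    pd1 (fun q : ℝ × ℝ => g (c q) q.2) q = dsp g (c q) q.2 (pd1 c q) := by
  have hm : HasFDerivAt (fun q : ℝ × ℝ => (c q, q.2))
      ((fderiv ℝ c q).prod (ContinuousLinearMap.snd ℝ ℝ ℝ)) q :=
    ((hc.differentiable (by simp) q).hasFDerivAt).prodMk hasFDerivAt_snd
  have h1 : HasFDerivAt (fun pr : (ℝ × ℝ) × ℝ => g pr.1 pr.2)
      (fderiv ℝ (fun pr : (ℝ × ℝ) × ℝ => g pr.1 pr.2) (c q, q.2)) (c q, q.2) :=
    (hg.differentiable (by simp) _).hasFDerivAt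
  have h3 : HasFDerivAt (fun q : ℝ × ℝ => g (c q) q.2)
      ((fderiv ℝ (fun pr : (ℝ × ℝ) × ℝ => g pr.1 pr.2) (c q, q.2)).comp
        ((fderiv ℝ c q).prod (ContinuousLinearMap.snd ℝ ℝ ℝ))) q := by have := h1.comp q hm; exact this
  have : pd1 (fun q : ℝ × ℝ => g (c q) q.2) q
      = fderiv ℝ (fun pr : (ℝ × ℝ) × ℝ => g pr.1 pr.2) (c q, q.2) (pd1 c q, 0) := by
    unfold pd1; rw [h3.fderiv]; rfl
  rw [this, dsp_eq_joint hg]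

lemma pd2_comp2 {g : (ℝ × ℝ) → ℝ → α} (hg : Smooth2 g) {c : ℝ × ℝ → ℝ × ℝ}
    (hc : ContDiff ℝ (⊤ : ℕ∞) c) (q : ℝ × ℝ) :
    pd2 (fun q : ℝ × ℝ => g (c q) q.2) q = dsp g (c q) q.2 (pd2 c q) + pt g (c q) q.2 := by
  have hm : HasFDerivAt (fun q : ℝ × ℝ => (c q, q.2))
      ((fderiv ℝ c q).prod (ContinuousLinearMap.snd ℝ ℝ ℝ)) q :=
    ((hc.differentiable (by simp) q).hasFDerivAt).prodMk hasFDerivAt_snd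
  have h1 : HasFDerivAt (fun pr : (ℝ × ℝ) × ℝ => g pr.1 pr.2)
      (fderiv ℝ (fun pr : (ℝ × ℝ) × ℝ => g pr.1 pr.2) (c q, q.2)) (c q, q.2) :=
    (hg.differentiable (by simp) _).hasFDerivAt
  have h3 : HasFDerivAt (fun q : ℝ × ℝ => g (c q) q.2)
      ((fderiv ℝ (fun pr : (ℝ × ℝ) × ℝ => g pr.1 pr.2) (c q, q.2)).comp
        ((fderiv ℝ c q).prod (ContinuousLinearMap.snd ℝ ℝ ℝ))) q := by have := h1.comp q hm; exact this
  have h4 : pd2 (fun q : ℝ × ℝ => g (c q) q.2) q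
      = fderiv ℝ (fun pr : (ℝ × ℝ) × ℝ => g pr.1 pr.2) (c q, q.2) (pd2 c q, 1) := by
    unfold pd2; rw [h3.fderiv]; rfl
  have h5 : ((pd2 c q, (1 : ℝ)) : (ℝ × ℝ) × ℝ) = (pd2 c q, 0) + ((0 : ℝ × ℝ), 1) := by
    simp
  rw [h4, h5, map_add, dsp_eq_joint hg, pt_eq_joint hg]

end generic

lemma fderiv_fst_apply {k : ℝ × ℝ → ℝ × ℝ} (hk : ContDiff ℝ (⊤ : ℕ∞) k) (q v : ℝ × ℝ) :
    fderiv ℝ (fun q' => (k q').1) q v = (fderiv ℝ k q v).1 := by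
  have h : HasFDerivAt k (fderiv ℝ k q) q := (hk.differentiable (by simp) q).hasFDerivAt
  have h2 : HasFDerivAt (fun q' => (k q').1)
      ((ContinuousLinearMap.fst ℝ ℝ ℝ).comp (fderiv ℝ k q)) q :=
    (ContinuousLinearMap.fst ℝ ℝ ℝ).hasFDerivAt.comp q h
  rw [h2.fderiv]; rfl

lemma fderiv_snd_apply {k : ℝ × ℝ → ℝ × ℝ} (hk : ContDiff ℝ (⊤ : ℕ∞) k) (q v : ℝ × ℝ) :
    fderiv ℝ (fun q' => (k q').2) q v = (fderiv ℝ k q v).2 := by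
  have h : HasFDerivAt k (fderiv ℝ k q) q := (hk.differentiable (by simp) q).hasFDerivAt
  have h2 : HasFDerivAt (fun q' => (k q').2)
      ((ContinuousLinearMap.snd ℝ ℝ ℝ).comp (fderiv ℝ k q)) q :=
    (ContinuousLinearMap.snd ℝ ℝ ℝ).hasFDerivAt.comp q h
  rw [h2.fderiv]; rfl

lemma pd1_fst {k : ℝ × ℝ → ℝ × ℝ} (hk : ContDiff ℝ (⊤ : ℕ∞) k) (q : ℝ × ℝ) :
    pd1 (fun q' => (k q').1) q = (pd1 k q).1 := fderiv_fst_apply hk q _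
lemma pd1_snd {k : ℝ × ℝ → ℝ × ℝ} (hk : ContDiff ℝ (⊤ : ℕ∞) k) (q : ℝ × ℝ) :
    pd1 (fun q' => (k q').2) q = (pd1 k q).2 := fderiv_snd_apply hk q _
lemma pd2_fst {k : ℝ × ℝ → ℝ × ℝ} (hk : ContDiff ℝ (⊤ : ℕ∞) k) (q : ℝ × ℝ) :
    pd2 (fun q' => (k q').1) q = (pd2 k q).1 := fderiv_fst_apply hk q _
lemma pd2_snd {k : ℝ × ℝ → ℝ × ℝ} (hk : ContDiff ℝ (⊤ : ℕ∞) k) (q : ℝ × ℝ) :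
    pd2 (fun q' => (k q').2) q = (pd2 k q).2 := fderiv_snd_apply hk q _

lemma dsp_lin (g : (ℝ × ℝ) → ℝ → ℝ) (x : ℝ × ℝ) (t : ℝ) (v : ℝ × ℝ) :
    dsp g x t v = v.1 * dsp g x t ex + v.2 * dsp g x t ez := by
  unfold dsp ex ez
  conv_lhs => rw [show v = v.1 • ((1 : ℝ), (0 : ℝ)) + v.2 • ((0 : ℝ), (1 : ℝ)) by
    ext <;> simp]
  rw [map_add, map_smul, map_smul, smul_eq_mul, smul_eq_mul]

/-! ### specialized layer -/

noncomputable def cc (φ : (ℝ × ℝ) → ℝ → ℝ × ℝ) (γ : ℝ → ℝ × ℝ) (q : ℝ × ℝ) : ℝ × ℝ :=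
  φ (γ q.1) q.2

noncomputable def hh (uS : (ℝ × ℝ) → ℝ → ℝ × ℝ) (uT θS : (ℝ × ℝ) → ℝ → ℝ)
    (φ : (ℝ × ℝ) → ℝ → ℝ × ℝ) (γ : ℝ → ℝ × ℝ) (f s : ℝ) (q : ℝ × ℝ) : ℝ :=
  s * ((uS (cc φ γ q) q.2).1 * pd1 (fun q' => (cc φ γ q').1) q
     + (uS (cc φ γ q) q.2).2 * pd1 (fun q' => (cc φ γ q').2) q)
  - (uT (cc φ γ q) q.2 + f * (cc φ γ q).1) * pd1 (fun q' => θS (cc φ γ q') q'.2) q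

noncomputable def Fn (uS : (ℝ × ℝ) → ℝ → ℝ × ℝ) (uT θS P : (ℝ × ℝ) → ℝ → ℝ)
    (φ : (ℝ × ℝ) → ℝ → ℝ × ℝ) (γ : ℝ → ℝ × ℝ) (f gr H s : ℝ) (q : ℝ × ℝ) : ℝ :=
  s * (((uS (cc φ γ q) q.2).1 * (uS (cc φ γ q) q.2).1
      + (uS (cc φ γ q) q.2).2 * (uS (cc φ γ q) q.2).2) / 2
    - P (cc φ γ q) q.2
    + uT (cc φ γ q) q.2 * uT (cc φ γ q) q.2 / 2
    + f * (cc φ γ q).1 * uT (cc φ γ q) q.2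
    + gr * ((cc φ γ q).2 - H / 2) * θS (cc φ γ q) q.2)

section main
variable {uS : (ℝ × ℝ) → ℝ → ℝ × ℝ} {uT θS P : (ℝ × ℝ) → ℝ → ℝ}
variable {φ : (ℝ × ℝ) → ℝ → ℝ × ℝ} {γ : ℝ → ℝ × ℝ}
variable {f gr H s : ℝ}

lemma cc_smooth (hφ : Smooth2 φ) (hγ : ContDiff ℝ (⊤ : ℕ∞) γ) : ContDiff ℝ (⊤ : ℕ∞) (cc φ γ) :=
  hφ.comp ((hγ.comp contDiff_fst).prodMk contDiff_snd)

lemma hh_smooth (huS : Smooth2 uS) (huT : Smooth2 uT) (hθS : Smooth2 θS)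
    (hφ : Smooth2 φ) (hγ : ContDiff ℝ (⊤ : ℕ∞) γ) : ContDiff ℝ (⊤ : ℕ∞) (hh uS uT θS φ γ f s) := by
  have hcs := cc_smooth hφ hγ
  have hU : ContDiff ℝ (⊤ : ℕ∞) (fun q : ℝ × ℝ => uS (cc φ γ q) q.2) := contDiff_comp2 huS hcs
  exact (contDiff_const.mul
      ((hU.fst.mul (contDiff_pd1 hcs.fst)).add (hU.snd.mul (contDiff_pd1 hcs.snd)))).sub
    (((contDiff_comp2 huT hcs).add (contDiff_const.mul hcs.fst)).mul
      (contDiff_pd1 (contDiff_comp2 hθS hcs)))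

lemma Fn_smooth (huS : Smooth2 uS) (huT : Smooth2 uT) (hθS : Smooth2 θS) (hP : Smooth2 P)
    (hφ : Smooth2 φ) (hγ : ContDiff ℝ (⊤ : ℕ∞) γ) : ContDiff ℝ (⊤ : ℕ∞) (Fn uS uT θS P φ γ f gr H s) := by
  have hcs := cc_smooth hφ hγ
  have hU : ContDiff ℝ (⊤ : ℕ∞) (fun q : ℝ × ℝ => uS (cc φ γ q) q.2) := contDiff_comp2 huS hcs
  have hT := contDiff_comp2 huT hcs
  have h1 := (((hU.fst.mul hU.fst).add (hU.snd.mul hU.snd)).div_const 2).sub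
      (contDiff_comp2 hP hcs)
  have h2 := h1.add ((hT.mul hT).div_const 2)
  have h3 := h2.add (((contDiff_const (c := f)).mul hcs.fst).mul hT)
  have h4 := h3.add
      (((contDiff_const (c := gr)).mul (hcs.snd.sub (contDiff_const (c := H / 2)))).mul (contDiff_comp2 hθS hcs))
  exact contDiff_const.mul h4
lemma flow_fact (hφ : Smooth2 φ) (hγ : ContDiff ℝ (⊤ : ℕ∞) γ)
    (hflow : ∀ X t, deriv (fun τ => φ X τ) t = uS (φ X t) t) (σ t : ℝ) :
    pd2 (cc φ γ) (σ, t) = uS (cc φ γ (σ, t)) t := by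
  have h := (hasDerivAt_pd2 (cc_smooth hφ hγ) σ t).deriv
  rw [← h]
  exact hflow (γ σ) t

lemma p2C1_fact (hφ : Smooth2 φ) (hγ : ContDiff ℝ (⊤ : ℕ∞) γ)
    (hflow : ∀ X t, deriv (fun τ => φ X τ) t = uS (φ X t) t) (σ t : ℝ) :
    pd2 (fun q' => (cc φ γ q').1) (σ, t) = (uS (cc φ γ (σ, t)) t).1 := by
  rw [pd2_fst (cc_smooth hφ hγ), flow_fact hφ hγ hflow]

lemma p2C2_fact (hφ : Smooth2 φ) (hγ : ContDiff ℝ (⊤ : ℕ∞) γ)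
    (hflow : ∀ X t, deriv (fun τ => φ X τ) t = uS (φ X t) t) (σ t : ℝ) :
    pd2 (fun q' => (cc φ γ q').2) (σ, t) = (uS (cc φ γ (σ, t)) t).2 := by
  rw [pd2_snd (cc_smooth hφ hγ), flow_fact hφ hγ hflow]

lemma mom1_fact (huS : Smooth2 uS) (hφ : Smooth2 φ) (hγ : ContDiff ℝ (⊤ : ℕ∞) γ)
    (hflow : ∀ X t, deriv (fun τ => φ X τ) t = uS (φ X t) t)
    (hmom : ∀ x t, pt uS x t + dsp uS x t (uS x t) - (f * uT x t) • ex
      = -grad P x t + (gr * θS x t) • ez) (σ t : ℝ) :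
    pd2 (fun q' => (uS (cc φ γ q') q'.2).1) (σ, t)
      = f * uT (cc φ γ (σ, t)) t - dsp P (cc φ γ (σ, t)) t ex := by
  have hcs := cc_smooth hφ hγ
  have e0 := pd2_comp2 huS hcs (σ, t)
  have e : pd2 (fun q : ℝ × ℝ => uS (cc φ γ q) q.2) (σ, t)
      = dsp uS (cc φ γ (σ, t)) t (pd2 (cc φ γ) (σ, t)) + pt uS (cc φ γ (σ, t)) t := e0
  rw [flow_fact hφ hγ hflow] at e
  have e1 : pd2 (fun q' => (uS (cc φ γ q') q'.2).1) (σ, t)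
      = (pd2 (fun q : ℝ × ℝ => uS (cc φ γ q) q.2) (σ, t)).1 :=
    pd2_fst (contDiff_comp2 huS hcs) (σ, t)
  rw [e1, e]
  have hm := congrArg Prod.fst (hmom (cc φ γ (σ, t)) t)
  simp only [Prod.fst_add, Prod.fst_sub, Prod.smul_fst, Prod.fst_neg, grad, ex, ez,
    smul_eq_mul, mul_one, mul_zero] at hm ⊢
  linarith

lemma mom2_fact (huS : Smooth2 uS) (hφ : Smooth2 φ) (hγ : ContDiff ℝ (⊤ : ℕ∞) γ)
    (hflow : ∀ X t, deriv (fun τ => φ X τ) t = uS (φ X t) t)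
    (hmom : ∀ x t, pt uS x t + dsp uS x t (uS x t) - (f * uT x t) • ex
      = -grad P x t + (gr * θS x t) • ez) (σ t : ℝ) :
    pd2 (fun q' => (uS (cc φ γ q') q'.2).2) (σ, t)
      = gr * θS (cc φ γ (σ, t)) t - dsp P (cc φ γ (σ, t)) t ez := by
  have hcs := cc_smooth hφ hγ
  have e0 := pd2_comp2 huS hcs (σ, t)
  have e : pd2 (fun q : ℝ × ℝ => uS (cc φ γ q) q.2) (σ, t)
      = dsp uS (cc φ γ (σ, t)) t (pd2 (cc φ γ) (σ, t)) + pt uS (cc φ γ (σ, t)) t := e0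
  rw [flow_fact hφ hγ hflow] at e
  have e1 : pd2 (fun q' => (uS (cc φ γ q') q'.2).2) (σ, t)
      = (pd2 (fun q : ℝ × ℝ => uS (cc φ γ q) q.2) (σ, t)).2 :=
    pd2_snd (contDiff_comp2 huS hcs) (σ, t)
  rw [e1, e]
  have hm := congrArg Prod.snd (hmom (cc φ γ (σ, t)) t)
  simp only [Prod.snd_add, Prod.snd_sub, Prod.smul_snd, Prod.snd_neg, grad, ex, ez,
    smul_eq_mul, mul_one, mul_zero] at hm ⊢
  linarith

lemma trans_fact (huT : Smooth2 uT) (hφ : Smooth2 φ) (hγ : ContDiff ℝ (⊤ : ℕ∞) γ)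
    (hflow : ∀ X t, deriv (fun τ => φ X τ) t = uS (φ X t) t)
    (htrans : ∀ x t, pt uT x t + dsp uT x t (uS x t) + f * (uS x t).1
      = -(gr * (x.2 - H / 2) * s)) (σ t : ℝ) :
    pd2 (fun q' => uT (cc φ γ q') q'.2) (σ, t)
      = -(f * (uS (cc φ γ (σ, t)) t).1) - gr * ((cc φ γ (σ, t)).2 - H / 2) * s := by
  have hcs := cc_smooth hφ hγ
  have e0 := pd2_comp2 huT hcs (σ, t)
  have e : pd2 (fun q : ℝ × ℝ => uT (cc φ γ q) q.2) (σ, t)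
      = dsp uT (cc φ γ (σ, t)) t (pd2 (cc φ γ) (σ, t)) + pt uT (cc φ γ (σ, t)) t := e0
  rw [flow_fact hφ hγ hflow] at e
  have hm := htrans (cc φ γ (σ, t)) t
  rw [e]
  linarith

lemma theta_fact (hθS : Smooth2 θS) (hφ : Smooth2 φ) (hγ : ContDiff ℝ (⊤ : ℕ∞) γ)
    (hflow : ∀ X t, deriv (fun τ => φ X τ) t = uS (φ X t) t)
    (hθ : ∀ x t, pt θS x t + dsp θS x t (uS x t) + uT x t * s = 0) (σ t : ℝ) :
    pd2 (fun q' => θS (cc φ γ q') q'.2) (σ, t) = -(uT (cc φ γ (σ, t)) t * s) := by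
  have hcs := cc_smooth hφ hγ
  have e0 := pd2_comp2 hθS hcs (σ, t)
  have e : pd2 (fun q : ℝ × ℝ => θS (cc φ γ q) q.2) (σ, t)
      = dsp θS (cc φ γ (σ, t)) t (pd2 (cc φ γ) (σ, t)) + pt θS (cc φ γ (σ, t)) t := e0
  rw [flow_fact hφ hγ hflow] at e
  have hm := hθ (cc φ γ (σ, t)) t
  rw [e]
  linarith
lemma cl1_fact (hφ : Smooth2 φ) (hγ : ContDiff ℝ (⊤ : ℕ∞) γ)
    (hflow : ∀ X t, deriv (fun τ => φ X τ) t = uS (φ X t) t) (σ t : ℝ) :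
    pd2 (pd1 (fun q' => (cc φ γ q').1)) (σ, t)
      = pd1 (fun q' => (uS (cc φ γ q') q'.2).1) (σ, t) := by
  have hcs := cc_smooth hφ hγ
  rw [pd_comm hcs.fst (σ, t)]
  rw [show pd2 (fun q' => (cc φ γ q').1) = (fun q' => (uS (cc φ γ q') q'.2).1) from
    funext fun q => p2C1_fact hφ hγ hflow q.1 q.2]

lemma cl2_fact (hφ : Smooth2 φ) (hγ : ContDiff ℝ (⊤ : ℕ∞) γ)
    (hflow : ∀ X t, deriv (fun τ => φ X τ) t = uS (φ X t) t) (σ t : ℝ) :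
    pd2 (pd1 (fun q' => (cc φ γ q').2)) (σ, t)
      = pd1 (fun q' => (uS (cc φ γ q') q'.2).2) (σ, t) := by
  have hcs := cc_smooth hφ hγ
  rw [pd_comm hcs.snd (σ, t)]
  rw [show pd2 (fun q' => (cc φ γ q').2) = (fun q' => (uS (cc φ γ q') q'.2).2) from
    funext fun q => p2C2_fact hφ hγ hflow q.1 q.2]

lemma cl3_fact (huT : Smooth2 uT) (hθS : Smooth2 θS) (hφ : Smooth2 φ) (hγ : ContDiff ℝ (⊤ : ℕ∞) γ)
    (hflow : ∀ X t, deriv (fun τ => φ X τ) t = uS (φ X t) t)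
    (hθ : ∀ x t, pt θS x t + dsp θS x t (uS x t) + uT x t * s = 0) (σ t : ℝ) :
    pd2 (pd1 (fun q' => θS (cc φ γ q') q'.2)) (σ, t)
      = -(s * pd1 (fun q' => uT (cc φ γ q') q'.2) (σ, t)) := by
  have hcs := cc_smooth hφ hγ
  have hT := contDiff_comp2 huT hcs
  rw [pd_comm (contDiff_comp2 hθS hcs) (σ, t)]
  rw [show pd2 (fun q' => θS (cc φ γ q') q'.2) = (fun q' => -(uT (cc φ γ q') q'.2 * s)) from
    funext fun q => theta_fact hθS hφ hγ hflow hθ q.1 q.2]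
  have h1 : HasDerivAt (fun x : ℝ => -(uT (cc φ γ (x, t)) (x, t).2 * s))
      (-(pd1 (fun q' => uT (cc φ γ q') q'.2) (σ, t) * s)) σ :=
    ((hasDerivAt_pd1 hT σ t).mul_const s).neg
  have h2 := hasDerivAt_pd1 ((hT.mul (contDiff_const (c := s))).neg) σ t
  rw [h2.unique h1]; ring

lemma press_fact (hP : Smooth2 P) (hφ : Smooth2 φ) (hγ : ContDiff ℝ (⊤ : ℕ∞) γ) (σ t : ℝ) :
    pd1 (fun q' => P (cc φ γ q') q'.2) (σ, t)
      = pd1 (fun q' => (cc φ γ q').1) (σ, t) * dsp P (cc φ γ (σ, t)) t ex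
      + pd1 (fun q' => (cc φ γ q').2) (σ, t) * dsp P (cc φ γ (σ, t)) t ez := by
  have hcs := cc_smooth hφ hγ
  have e0 := pd1_comp2 hP hcs (σ, t)
  have e : pd1 (fun q : ℝ × ℝ => P (cc φ γ q) q.2) (σ, t)
      = dsp P (cc φ γ (σ, t)) t (pd1 (cc φ γ) (σ, t)) := e0
  rw [e, dsp_lin, ← pd1_fst hcs, ← pd1_snd hcs]

lemma key_deriv (huS : Smooth2 uS) (huT : Smooth2 uT) (hθS : Smooth2 θS) (hP : Smooth2 P)
    (hφ : Smooth2 φ) (hγ : ContDiff ℝ (⊤ : ℕ∞) γ)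
    (hmom : ∀ x t, pt uS x t + dsp uS x t (uS x t) - (f * uT x t) • ex
      = -grad P x t + (gr * θS x t) • ez)
    (htrans : ∀ x t, pt uT x t + dsp uT x t (uS x t) + f * (uS x t).1
      = -(gr * (x.2 - H / 2) * s))
    (hθ : ∀ x t, pt θS x t + dsp θS x t (uS x t) + uT x t * s = 0)
    (hflow : ∀ X t, deriv (fun τ => φ X τ) t = uS (φ X t) t) (σ t : ℝ) :
    HasDerivAt (fun τ => hh uS uT θS φ γ f s (σ, τ))
      (pd1 (Fn uS uT θS P φ γ f gr H s) (σ, t)) t := by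
  have hcs := cc_smooth hφ hγ
  have hU : ContDiff ℝ (⊤ : ℕ∞) (fun q : ℝ × ℝ => uS (cc φ γ q) q.2) := contDiff_comp2 huS hcs
  have hT := contDiff_comp2 huT hcs
  have hTh := contDiff_comp2 hθS hcs
  have hPc := contDiff_comp2 hP hcs
  -- τ-derivatives of the atoms
  have dU1 := hasDerivAt_pd2 hU.fst σ t
  have dU2 := hasDerivAt_pd2 hU.snd σ t
  have dT := hasDerivAt_pd2 hT σ t
  have dC1 := hasDerivAt_pd2 hcs.fst σ t
  have dA1 := hasDerivAt_pd2 (contDiff_pd1 hcs.fst) σ t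
  have dA2 := hasDerivAt_pd2 (contDiff_pd1 hcs.snd) σ t
  have dB := hasDerivAt_pd2 (contDiff_pd1 hTh) σ t
  have dh : HasDerivAt (fun τ => hh uS uT θS φ γ f s (σ, τ))
      (s * ((pd2 (fun q' => (uS (cc φ γ q') q'.2).1) (σ, t)
              * pd1 (fun q' => (cc φ γ q').1) (σ, t)
            + (uS (cc φ γ (σ, t)) t).1 * pd2 (pd1 (fun q' => (cc φ γ q').1)) (σ, t))
          + (pd2 (fun q' => (uS (cc φ γ q') q'.2).2) (σ, t)
              * pd1 (fun q' => (cc φ γ q').2) (σ, t)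
            + (uS (cc φ γ (σ, t)) t).2 * pd2 (pd1 (fun q' => (cc φ γ q').2)) (σ, t)))
        - ((pd2 (fun q' => uT (cc φ γ q') q'.2) (σ, t)
              + f * pd2 (fun q' => (cc φ γ q').1) (σ, t))
             * pd1 (fun q' => θS (cc φ γ q') q'.2) (σ, t)
          + (uT (cc φ γ (σ, t)) t + f * (cc φ γ (σ, t)).1)
             * pd2 (pd1 (fun q' => θS (cc φ γ q') q'.2)) (σ, t))) t :=
    (((dU1.mul dA1).add (dU2.mul dA2)).const_mul s).sub
      ((dT.add (dC1.const_mul f)).mul dB)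
  -- σ-derivatives of the atoms
  have eU1 := hasDerivAt_pd1 hU.fst σ t
  have eU2 := hasDerivAt_pd1 hU.snd σ t
  have eT := hasDerivAt_pd1 hT σ t
  have eC1 := hasDerivAt_pd1 hcs.fst σ t
  have eC2 := hasDerivAt_pd1 hcs.snd σ t
  have eTh := hasDerivAt_pd1 hTh σ t
  have eP := hasDerivAt_pd1 hPc σ t
  have dF : HasDerivAt (fun x => Fn uS uT θS P φ γ f gr H s (x, t))
      (s * (((pd1 (fun q' => (uS (cc φ γ q') q'.2).1) (σ, t) * (uS (cc φ γ (σ, t)) t).1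
            + (uS (cc φ γ (σ, t)) t).1 * pd1 (fun q' => (uS (cc φ γ q') q'.2).1) (σ, t))
            + (pd1 (fun q' => (uS (cc φ γ q') q'.2).2) (σ, t) * (uS (cc φ γ (σ, t)) t).2
            + (uS (cc φ γ (σ, t)) t).2 * pd1 (fun q' => (uS (cc φ γ q') q'.2).2) (σ, t))) / 2
          - pd1 (fun q' => P (cc φ γ q') q'.2) (σ, t)
          + (pd1 (fun q' => uT (cc φ γ q') q'.2) (σ, t) * uT (cc φ γ (σ, t)) t
            + uT (cc φ γ (σ, t)) t * pd1 (fun q' => uT (cc φ γ q') q'.2) (σ, t)) / 2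
          + (f * pd1 (fun q' => (cc φ γ q').1) (σ, t) * uT (cc φ γ (σ, t)) t
            + f * (cc φ γ (σ, t)).1 * pd1 (fun q' => uT (cc φ γ q') q'.2) (σ, t))
          + (gr * pd1 (fun q' => (cc φ γ q').2) (σ, t) * θS (cc φ γ (σ, t)) t
            + gr * ((cc φ γ (σ, t)).2 - H / 2)
              * pd1 (fun q' => θS (cc φ γ q') q'.2) (σ, t)))) σ :=
    ((((((eU1.mul eU1).add (eU2.mul eU2)).div_const 2).sub eP).add
        ((eT.mul eT).div_const 2)).add
      ((eC1.const_mul f).mul eT)).add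
      (((eC2.sub_const (H / 2)).const_mul gr).mul eTh) |>.const_mul s
  have heq := (hasDerivAt_pd1 (Fn_smooth huS huT hθS hP hφ hγ
      (f := f) (gr := gr) (H := H) (s := s)) σ t).unique dF
  rw [heq]
  have hrw :
      (s * ((pd2 (fun q' => (uS (cc φ γ q') q'.2).1) (σ, t)
              * pd1 (fun q' => (cc φ γ q').1) (σ, t)
            + (uS (cc φ γ (σ, t)) t).1 * pd2 (pd1 (fun q' => (cc φ γ q').1)) (σ, t))
          + (pd2 (fun q' => (uS (cc φ γ q') q'.2).2) (σ, t)
              * pd1 (fun q' => (cc φ γ q').2) (σ, t)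
            + (uS (cc φ γ (σ, t)) t).2 * pd2 (pd1 (fun q' => (cc φ γ q').2)) (σ, t)))
        - ((pd2 (fun q' => uT (cc φ γ q') q'.2) (σ, t)
              + f * pd2 (fun q' => (cc φ γ q').1) (σ, t))
             * pd1 (fun q' => θS (cc φ γ q') q'.2) (σ, t)
          + (uT (cc φ γ (σ, t)) t + f * (cc φ γ (σ, t)).1)
             * pd2 (pd1 (fun q' => θS (cc φ γ q') q'.2)) (σ, t)))
      = (s * (((pd1 (fun q' => (uS (cc φ γ q') q'.2).1) (σ, t) * (uS (cc φ γ (σ, t)) t).1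
            + (uS (cc φ γ (σ, t)) t).1 * pd1 (fun q' => (uS (cc φ γ q') q'.2).1) (σ, t))
            + (pd1 (fun q' => (uS (cc φ γ q') q'.2).2) (σ, t) * (uS (cc φ γ (σ, t)) t).2
            + (uS (cc φ γ (σ, t)) t).2 * pd1 (fun q' => (uS (cc φ γ q') q'.2).2) (σ, t))) / 2
          - pd1 (fun q' => P (cc φ γ q') q'.2) (σ, t)
          + (pd1 (fun q' => uT (cc φ γ q') q'.2) (σ, t) * uT (cc φ γ (σ, t)) t
            + uT (cc φ γ (σ, t)) t * pd1 (fun q' => uT (cc φ γ q') q'.2) (σ, t)) / 2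
          + (f * pd1 (fun q' => (cc φ γ q').1) (σ, t) * uT (cc φ γ (σ, t)) t
            + f * (cc φ γ (σ, t)).1 * pd1 (fun q' => uT (cc φ γ q') q'.2) (σ, t))
          + (gr * pd1 (fun q' => (cc φ γ q').2) (σ, t) * θS (cc φ γ (σ, t)) t
            + gr * ((cc φ γ (σ, t)).2 - H / 2)
              * pd1 (fun q' => θS (cc φ γ q') q'.2) (σ, t)))) := by
    rw [mom1_fact huS hφ hγ hflow hmom σ t, mom2_fact huS hφ hγ hflow hmom σ t,
      trans_fact huT hφ hγ hflow htrans σ t, p2C1_fact hφ hγ hflow σ t,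
      cl1_fact hφ hγ hflow σ t, cl2_fact hφ hγ hflow σ t,
      cl3_fact huT hθS hφ hγ hflow hθ σ t, press_fact hP hφ hγ σ t]
    ring
  exact hrw ▸ dh
lemma per_fact (hper : ∀ σ : ℝ, γ (σ + 1) = γ σ) (t : ℝ) :
    Fn uS uT θS P φ γ f gr H s (1, t) = Fn uS uT θS P φ γ f gr H s (0, t) := by
  have h10 : cc φ γ (1, t) = cc φ γ (0, t) := by
    show φ (γ 1) t = φ (γ 0) t
    have hγ10 : γ (1 : ℝ) = γ 0 := by
      conv_lhs => rw [show (1 : ℝ) = 0 + 1 from (zero_add 1).symm]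
      exact hper 0
    rw [hγ10]
  unfold Fn
  rw [h10]

lemma inner_zero (huS : Smooth2 uS) (huT : Smooth2 uT) (hθS : Smooth2 θS) (hP : Smooth2 P)
    (hφ : Smooth2 φ) (hγ : ContDiff ℝ (⊤ : ℕ∞) γ) (hper : ∀ σ : ℝ, γ (σ + 1) = γ σ) (t : ℝ) :
    (∫ σ in (0:ℝ)..1, pd1 (Fn uS uT θS P φ γ f gr H s) (σ, t)) = 0 := by
  have hFs := Fn_smooth huS huT hθS hP hφ hγ (f := f) (gr := gr) (H := H) (s := s)
  rw [intervalIntegral.integral_eq_sub_of_hasDerivAt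
      (f := fun x => Fn uS uT θS P φ γ f gr H s (x, t))
      (fun σ _ => hasDerivAt_pd1 hFs σ t)
      (((contDiff_pd1 hFs).continuous.comp
        (continuous_id.prodMk continuous_const)).intervalIntegrable 0 1)]
  rw [per_fact hper t, sub_self]

lemma circ_const (huS : Smooth2 uS) (huT : Smooth2 uT) (hθS : Smooth2 θS) (hP : Smooth2 P)
    (hφ : Smooth2 φ) (hγ : ContDiff ℝ (⊤ : ℕ∞) γ)
    (hmom : ∀ x t, pt uS x t + dsp uS x t (uS x t) - (f * uT x t) • ex
      = -grad P x t + (gr * θS x t) • ez)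
    (htrans : ∀ x t, pt uT x t + dsp uT x t (uS x t) + f * (uS x t).1
      = -(gr * (x.2 - H / 2) * s))
    (hθ : ∀ x t, pt θS x t + dsp θS x t (uS x t) + uT x t * s = 0)
    (hflow : ∀ X t, deriv (fun τ => φ X τ) t = uS (φ X t) t)
    (hper : ∀ σ : ℝ, γ (σ + 1) = γ σ)
    (t₁ t₂ : ℝ) (h12 : t₁ ≤ t₂) :
    (∫ σ in (0:ℝ)..1, hh uS uT θS φ γ f s (σ, t₁))
      = ∫ σ in (0:ℝ)..1, hh uS uT θS φ γ f s (σ, t₂) := by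
  have hhs := hh_smooth huS huT hθS hφ hγ (f := f) (s := s)
  have hFs := Fn_smooth huS huT hθS hP hφ hγ (f := f) (gr := gr) (H := H) (s := s)
  have hKc : Continuous (pd1 (Fn uS uT θS P φ γ f gr H s)) := (contDiff_pd1 hFs).continuous
  have int1 : IntervalIntegrable (fun σ => hh uS uT θS φ γ f s (σ, t₁))
      MeasureTheory.volume 0 1 :=
    (hhs.continuous.comp (continuous_id.prodMk continuous_const)).intervalIntegrable 0 1
  have int2 : IntervalIntegrable (fun σ => hh uS uT θS φ γ f s (σ, t₂))
      MeasureTheory.volume 0 1 :=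
    (hhs.continuous.comp (continuous_id.prodMk continuous_const)).intervalIntegrable 0 1
  have step : ∀ σ : ℝ, hh uS uT θS φ γ f s (σ, t₂) - hh uS uT θS φ γ f s (σ, t₁)
      = ∫ t in t₁..t₂, pd1 (Fn uS uT θS P φ γ f gr H s) (σ, t) := by
    intro σ
    rw [intervalIntegral.integral_eq_sub_of_hasDerivAt
      (fun t _ => key_deriv huS huT hθS hP hφ hγ hmom htrans hθ hflow σ t)
      ((hKc.comp (continuous_const.prodMk continuous_id)).intervalIntegrable t₁ t₂)]
  have hcont : Continuous (Function.uncurry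
      fun σ t => pd1 (Fn uS uT θS P φ γ f gr H s) (σ, t)) :=
    hKc.comp (continuous_fst.prodMk continuous_snd)
  have hint : MeasureTheory.Integrable
      (Function.uncurry fun σ t => pd1 (Fn uS uT θS P φ γ f gr H s) (σ, t))
      ((MeasureTheory.volume.restrict (Set.Ioc (0:ℝ) 1)).prod
        (MeasureTheory.volume.restrict (Set.Ioc t₁ t₂))) := by
    rw [MeasureTheory.Measure.prod_restrict]
    exact ((hcont.continuousOn).integrableOn_compact
        (isCompact_Icc.prod isCompact_Icc)).mono_set
      (Set.prod_mono Set.Ioc_subset_Icc_self Set.Ioc_subset_Icc_self)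
  have swap : (∫ σ in (0:ℝ)..1, ∫ t in t₁..t₂, pd1 (Fn uS uT θS P φ γ f gr H s) (σ, t))
      = ∫ t in t₁..t₂, ∫ σ in (0:ℝ)..1, pd1 (Fn uS uT θS P φ γ f gr H s) (σ, t) := by
    simp only [intervalIntegral.integral_of_le h12,
      intervalIntegral.integral_of_le (zero_le_one' ℝ)]
    exact MeasureTheory.integral_integral_swap hint
  have sub0 : (∫ σ in (0:ℝ)..1, hh uS uT θS φ γ f s (σ, t₂))
      - (∫ σ in (0:ℝ)..1, hh uS uT θS φ γ f s (σ, t₁)) = 0 := by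
    rw [← intervalIntegral.integral_sub int2 int1]
    rw [intervalIntegral.integral_congr (g := fun σ =>
      ∫ t in t₁..t₂, pd1 (Fn uS uT θS P φ γ f gr H s) (σ, t)) (fun σ _ => step σ)]
    rw [swap]
    simp only [inner_zero huS huT hθS hP hφ hγ hper]
    simp
  linarith
lemma repr_fact (hθS : Smooth2 θS) (hφ : Smooth2 φ) (hγ : ContDiff ℝ (⊤ : ℕ∞) γ) (t σ : ℝ) :
    dot (s • uS (φ (γ σ) t) t
        - (uT (φ (γ σ) t) t + f * (φ (γ σ) t).1) • grad θS (φ (γ σ) t) t)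
      (deriv (fun σ' => φ (γ σ') t) σ) = hh uS uT θS φ γ f s (σ, t) := by
  have hcs := cc_smooth hφ hγ
  have hd : deriv (fun σ' => φ (γ σ') t) σ = pd1 (cc φ γ) (σ, t) :=
    (hasDerivAt_pd1 hcs σ t).deriv
  have e0 := pd1_comp2 hθS hcs (σ, t)
  have e3 : pd1 (fun q' : ℝ × ℝ => θS (cc φ γ q') q'.2) (σ, t)
      = dsp θS (φ (γ σ) t) t (pd1 (cc φ γ) (σ, t)) := e0
  have e1 : pd1 (fun q' : ℝ × ℝ => (cc φ γ q').1) (σ, t) = (pd1 (cc φ γ) (σ, t)).1 :=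
    pd1_fst hcs (σ, t)
  have e2 : pd1 (fun q' : ℝ × ℝ => (cc φ γ q').2) (σ, t) = (pd1 (cc φ γ) (σ, t)).2 :=
    pd1_snd hcs (σ, t)
  show dot (s • uS (φ (γ σ) t) t
        - (uT (φ (γ σ) t) t + f * (φ (γ σ) t).1) • grad θS (φ (γ σ) t) t)
      (deriv (fun σ' => φ (γ σ') t) σ)
    = s * ((uS (φ (γ σ) t) t).1 * pd1 (fun q' : ℝ × ℝ => (cc φ γ q').1) (σ, t)
         + (uS (φ (γ σ) t) t).2 * pd1 (fun q' : ℝ × ℝ => (cc φ γ q').2) (σ, t))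
      - (uT (φ (γ σ) t) t + f * (φ (γ σ) t).1)
         * pd1 (fun q' : ℝ × ℝ => θS (cc φ γ q') q'.2) (σ, t)
  rw [hd, e1, e2, e3, dsp_lin]
  simp only [dot, grad, Prod.fst_sub, Prod.snd_sub, Prod.smul_fst, Prod.smul_snd, smul_eq_mul]
  ring

end main

/-- Kelvin circulation theorem for the Euler–Boussinesq vertical slice equations: for any
closed material loop advected by `u_S`, the circulation of `s·u_S − (u_T + f·x)∇θ_S`
is constant in time. -/
theorem eulerBoussinesq_kelvin_circulation
    (f g θ₀ H s : ℝ) (hθ₀ : θ₀ ≠ 0)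
    (uS : (ℝ × ℝ) → ℝ → ℝ × ℝ) (uT θS p : (ℝ × ℝ) → ℝ → ℝ)
    (huS : Smooth2 uS) (huT : Smooth2 uT) (hθS : Smooth2 θS) (hp : Smooth2 p)
    (hmom : ∀ x t, pt uS x t + dsp uS x t (uS x t) - (f * uT x t) • ex
      = -grad p x t + ((g / θ₀) * θS x t) • ez)
    (htrans : ∀ x t, pt uT x t + dsp uT x t (uS x t) + f * (uS x t).1
      = -((g / θ₀) * (x.2 - H / 2) * s))
    (hdiv : ∀ x t, div2 uS x t = 0)
    (hθ : ∀ x t, pt θS x t + dsp θS x t (uS x t) + uT x t * s = 0)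
    (φ : (ℝ × ℝ) → ℝ → ℝ × ℝ) (hφ : Smooth2 φ)
    (hflow : ∀ X t, deriv (fun τ => φ X τ) t = uS (φ X t) t)
    (γ : ℝ → ℝ × ℝ) (hγ : ContDiff ℝ (⊤ : ℕ∞) γ) (hper : ∀ σ : ℝ, γ (σ + 1) = γ σ) :
    ∀ t₁ t₂ : ℝ,
      (∫ σ in (0:ℝ)..1,
        dot ((s • uS (φ (γ σ) t₁) t₁
            - (uT (φ (γ σ) t₁) t₁ + f * (φ (γ σ) t₁).1) • grad θS (φ (γ σ) t₁) t₁))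
          (deriv (fun σ' => φ (γ σ') t₁) σ)) =
      (∫ σ in (0:ℝ)..1,
        dot ((s • uS (φ (γ σ) t₂) t₂
            - (uT (φ (γ σ) t₂) t₂ + f * (φ (γ σ) t₂).1) • grad θS (φ (γ σ) t₂) t₂))
          (deriv (fun σ' => φ (γ σ') t₂) σ)) := by
  intro t₁ t₂
  have hrepr := repr_fact (uS := uS) (uT := uT) (f := f) (s := s) hθS hφ hγ
  simp only [hrepr]
  rcases le_total t₁ t₂ with h | h
  · exact circ_const huS huT hθS hp hφ hγ hmom htrans hθ hflow hper t₁ t₂ h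
  · exact (circ_const huS huT hθS hp hφ hγ hmom htrans hθ hflow hper t₂ t₁ h).symm
end

section
/- Let f, g, θ₀, H ∈ ℝ with θ₀ ≠ 0, s ∈ ℝ, and let u_S : ℝ² × ℝ → ℝ², u_T, θ_S, p : ℝ² × ℝ → ℝ be smooth solutions of the Euler–Boussinesq vertical slice equations (∂_t u_S + u_S·∇u_S − f u_T x̂ = −∇p + (g/θ₀)θ_S ẑ; ∂_t u_T + u_S·∇u_T + f(u_S·x̂) = −(g/θ₀)(z−H/2)s; div u_S = 0; ∂_t θ_S + u_S·∇θ_S + u_T s = 0). Define a := u_S, m_T := u_T + f·x, b := (g/θ₀)(z − H/2), and c := ½(|u_S|² + u_T²) + f u_T x − p + (g/θ₀)θ_S(z − H/2). Then (a, m_T, b, c) satisfy the slice Euler–Poincaré equations: ∂_t a + u_S·∇a + (∇u_S)ᵀa + m_T ∇u_T + b ∇θ_S − ∇c = 0 and ∂_t m_T + u_S·∇m_T + s·b = 0 on ℝ² × ℝ. -/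
private lemma sliceS {α : Type*} [NormedAddCommGroup α] [NormedSpace ℝ α]
    {g : (ℝ × ℝ) → ℝ → α} (hg : Smooth2 g) (t : ℝ) :
    Differentiable ℝ (fun y => g y t) :=
  (hg.comp (contDiff_id.prodMk contDiff_const)).differentiable (by simp)

private lemma sliceT {α : Type*} [NormedAddCommGroup α] [NormedSpace ℝ α]
    {g : (ℝ × ℝ) → ℝ → α} (hg : Smooth2 g) (x : ℝ × ℝ) :
    Differentiable ℝ (fun τ => g x τ) :=
  (hg.comp (contDiff_const.prodMk contDiff_id)).differentiable (by simp)

/-- Solutions of the Euler–Boussinesq vertical slice equations satisfy the slice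
Euler–Poincaré equations with `a = u_S`, `m_T = u_T + f·x`, `b = (g/θ₀)(z − H/2)`,
`c = ½(|u_S|² + u_T²) + f u_T x − p + (g/θ₀)θ_S(z − H/2)`. -/
theorem eulerBoussinesq_eulerPoincare
    (f g θ₀ H s : ℝ) (hθ₀ : θ₀ ≠ 0)
    (uS : (ℝ × ℝ) → ℝ → ℝ × ℝ) (uT θS p : (ℝ × ℝ) → ℝ → ℝ)
    (huS : Smooth2 uS) (huT : Smooth2 uT) (hθS : Smooth2 θS) (hp : Smooth2 p)
    (hmom : ∀ x t, pt uS x t + dsp uS x t (uS x t) - (f * uT x t) • ex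
      = -grad p x t + ((g / θ₀) * θS x t) • ez)
    (htrans : ∀ x t, pt uT x t + dsp uT x t (uS x t) + f * (uS x t).1
      = -((g / θ₀) * (x.2 - H / 2) * s))
    (hdiv : ∀ x t, div2 uS x t = 0)
    (hθ : ∀ x t, pt θS x t + dsp θS x t (uS x t) + uT x t * s = 0) :
    (∀ (x : ℝ × ℝ) (t : ℝ),
      pt uS x t + dsp uS x t (uS x t) + gradT uS uS x t
        + (uT x t + f * x.1) • grad uT x t
        + ((g / θ₀) * (x.2 - H / 2)) • grad θS x t
        - grad (fun y τ =>
            (dot (uS y τ) (uS y τ) + (uT y τ) ^ 2) / 2 + f * uT y τ * y.1 - p y τ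
              + (g / θ₀) * θS y τ * (y.2 - H / 2)) x t = 0) ∧
    (∀ (x : ℝ × ℝ) (t : ℝ),
      pt (fun y τ => uT y τ + f * y.1) x t
        + dsp (fun y τ => uT y τ + f * y.1) x t (uS x t)
        + s * ((g / θ₀) * (x.2 - H / 2)) = 0) := by

  have hC : ∀ (x : ℝ × ℝ) (t : ℝ) (v : ℝ × ℝ), dsp (fun y τ =>
            (dot (uS y τ) (uS y τ) + (uT y τ) ^ 2) / 2 + f * uT y τ * y.1 - p y τ
              + (g / θ₀) * θS y τ * (y.2 - H / 2)) x t v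
      = (dot (dsp uS x t v) (uS x t) + uT x t * dsp uT x t v)
        + (f * dsp uT x t v * x.1 + f * uT x t * v.1) - dsp p x t v
        + ((g / θ₀) * dsp θS x t v * (x.2 - H / 2) + (g / θ₀) * θS x t * v.2) := by
    intro x t v
    have hU : HasFDerivAt (fun y => uS y t) (fderiv ℝ (fun y => uS y t) x) x :=
      ((sliceS huS t) x).hasFDerivAt
    have hT : HasFDerivAt (fun y => uT y t) (fderiv ℝ (fun y => uT y t) x) x :=
      ((sliceS huT t) x).hasFDerivAt
    have hS : HasFDerivAt (fun y => θS y t) (fderiv ℝ (fun y => θS y t) x) x :=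
      ((sliceS hθS t) x).hasFDerivAt
    have hP : HasFDerivAt (fun y => p y t) (fderiv ℝ (fun y => p y t) x) x :=
      ((sliceS hp t) x).hasFDerivAt
    have hfst : HasFDerivAt (fun y : ℝ × ℝ => y.1) (ContinuousLinearMap.fst ℝ ℝ ℝ) x :=
      hasFDerivAt_fst
    have hsnd : HasFDerivAt (fun y : ℝ × ℝ => y.2) (ContinuousLinearMap.snd ℝ ℝ ℝ) x :=
      hasFDerivAt_snd
    have hF := ((((((hU.fst.mul hU.fst).add (hU.snd.mul hU.snd)).add (hT.mul hT)).mul_const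
        (2:ℝ)⁻¹).add ((hT.const_mul f).mul hfst)).sub hP).add
        ((hS.const_mul (g / θ₀)).mul (hsnd.sub_const (H / 2)))
    have heq : (fun y : ℝ × ℝ =>
          (dot (uS y t) (uS y t) + (uT y t) ^ 2) / 2 + f * uT y t * y.1 - p y t
            + (g / θ₀) * θS y t * (y.2 - H / 2))
        = (fun y : ℝ × ℝ =>
          ((uS y t).1 * (uS y t).1 + (uS y t).2 * (uS y t).2 + uT y t * uT y t) * (2:ℝ)⁻¹
            + f * uT y t * y.1 - p y t + (g / θ₀) * θS y t * (y.2 - H / 2)) := by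
      funext y; simp [dot]; ring
    simp only [dsp]
    rw [heq, HasFDerivAt.fderiv (f := fun y : ℝ × ℝ =>
            ((uS y t).1 * (uS y t).1 + (uS y t).2 * (uS y t).2 + uT y t * uT y t) * (2:ℝ)⁻¹
              + f * uT y t * y.1 - p y t + (g / θ₀) * θS y t * (y.2 - H / 2)) hF]
    simp [dot]
    ring
  constructor
  · intro x t
    have hex1 : (ex : ℝ × ℝ).1 = 1 := rfl
    have hex2 : (ex : ℝ × ℝ).2 = 0 := rfl
    have hez1 : (ez : ℝ × ℝ).1 = 0 := rfl
    have hez2 : (ez : ℝ × ℝ).2 = 1 := rfl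
    have h1 := congrArg Prod.fst (hmom x t)
    have h2 := congrArg Prod.snd (hmom x t)
    simp only [Prod.fst_add, Prod.fst_sub, Prod.snd_add, Prod.snd_sub, Prod.smul_fst,
      Prod.smul_snd, Prod.fst_neg, Prod.snd_neg, grad, smul_eq_mul, hex1, hex2, hez1, hez2,
      mul_one, mul_zero, sub_zero, add_zero] at h1 h2
    have hcx := hC x t ex
    have hcz := hC x t ez
    rw [hex1, hex2] at hcx
    rw [hez1, hez2] at hcz
    apply Prod.ext
    · simp only [Prod.fst_add, Prod.fst_sub, Prod.smul_fst, smul_eq_mul, gradT, grad,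
        Prod.fst_zero]
      rw [hcx]
      linear_combination h1
    · simp only [Prod.snd_add, Prod.snd_sub, Prod.smul_snd, smul_eq_mul, gradT, grad,
        Prod.snd_zero]
      rw [hcz]
      linear_combination h2
  · intro x t
    have ht := htrans x t
    have hpt : pt (fun y τ => uT y τ + f * y.1) x t = pt uT x t := by
      simp only [pt]
      exact deriv_add_const _
    have hds : dsp (fun y τ => uT y τ + f * y.1) x t (uS x t)
        = dsp uT x t (uS x t) + f * (uS x t).1 := by
      have hT : HasFDerivAt (fun y => uT y t) (fderiv ℝ (fun y => uT y t) x) x :=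
        ((sliceS huT t) x).hasFDerivAt
      have hfst : HasFDerivAt (fun y : ℝ × ℝ => f * y.1)
          (f • ContinuousLinearMap.fst ℝ ℝ ℝ) x := hasFDerivAt_fst.const_mul f
      have h := hT.add hfst
      simp only [dsp]
      rw [HasFDerivAt.fderiv (f := fun y : ℝ × ℝ => uT y t + f * y.1) h]
      simp
    rw [hpt, hds]
    linarith [ht]
end

section
/- Let s ∈ ℝ and let u_S, w_S : ℝ² × ℝ → ℝ² and u_T, w_T, θ_S : ℝ² × ℝ → ℝ be smooth, satisfying on ℝ² × ℝ: ∂_t w_S + [u_S, w_S] = 0, ∂_t w_T + u_S·∇w_T − w_S·∇u_T = 0, and ∂_t θ_S + u_S·∇θ_S + s·u_T = 0. Suppose further there is a smooth map φ : ℝ² × ℝ → ℝ² with φ(X,0) = X, ∂_t φ(X,t) = u_S(φ(X,t),t) for all X and t, and φ(·,t) surjective for each t. If w_S(·,0)·∇θ_S(·,0) + s·w_T(·,0) = 0 on ℝ², then w_S·∇θ_S + s·w_T = 0 on all of ℝ² × ℝ; i.e., if (w_S,w_T) is initially a relabelling symmetry of θ_S then it remains one for all time. -/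
lemma aux_dsp {α : Type*} [NormedAddCommGroup α] [NormedSpace ℝ α]
    {g : (ℝ × ℝ) → ℝ → α} (hg : Smooth2 g) (x : ℝ × ℝ) (t : ℝ) (v : ℝ × ℝ) :
    dsp g x t v = fderiv ℝ (fun p : (ℝ × ℝ) × ℝ => g p.1 p.2) (x, t) (v, 0) := by
  have h := ((hg.differentiable (by simp)) (x, t)).hasFDerivAt.comp (f := fun y : ℝ × ℝ => (y, t)) x
    (hasFDerivAt_prodMk_left (𝕜 := ℝ) x t)
  have h' : HasFDerivAt (fun y : ℝ × ℝ => g y t)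
      ((fderiv ℝ (fun p : (ℝ × ℝ) × ℝ => g p.1 p.2) (x, t)).comp
        (ContinuousLinearMap.inl ℝ (ℝ × ℝ) ℝ)) x := h
  rw [dsp, h'.fderiv]
  rfl

lemma aux_pt {α : Type*} [NormedAddCommGroup α] [NormedSpace ℝ α]
    {g : (ℝ × ℝ) → ℝ → α} (hg : Smooth2 g) (x : ℝ × ℝ) (t : ℝ) :
    pt g x t = fderiv ℝ (fun p : (ℝ × ℝ) × ℝ => g p.1 p.2) (x, t) (0, 1) := by
  have hc : HasDerivAt (fun τ : ℝ => ((x, τ) : (ℝ × ℝ) × ℝ)) (0, 1) t :=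
    (hasDerivAt_const t x).prodMk (hasDerivAt_id t)
  have h := ((hg.differentiable (by simp)) (x, t)).hasFDerivAt.comp_hasDerivAt t hc
  have h' : HasDerivAt (fun τ : ℝ => g x τ)
      (fderiv ℝ (fun p : (ℝ × ℝ) × ℝ => g p.1 p.2) (x, t) (0, 1)) t := h
  rw [pt, h'.deriv]

lemma aux_mat {α : Type*} [NormedAddCommGroup α] [NormedSpace ℝ α]
    {g : (ℝ × ℝ) → ℝ → α} (hg : Smooth2 g) (x : ℝ × ℝ) (t : ℝ) (v : ℝ × ℝ) :
    fderiv ℝ (fun p : (ℝ × ℝ) × ℝ => g p.1 p.2) (x, t) (v, 1)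
      = pt g x t + dsp g x t v := by
  rw [aux_dsp hg, aux_pt hg, show ((v, (1:ℝ)) : (ℝ × ℝ) × ℝ) = (0, 1) + (v, 0) by simp,
    map_add]

/-- If `(w_S, w_T)` is initially a relabelling symmetry of θ_S (i.e.
`w_S·∇θ_S + s·w_T = 0` at `t = 0`), and satisfies the relabelling-symmetry evolution
equations while θ_S is transported, then it remains a relabelling symmetry of θ_S
for all time. -/
theorem relabelling_symmetry_persists
    (s : ℝ) (uS wS : (ℝ × ℝ) → ℝ → ℝ × ℝ) (uT wT θS : (ℝ × ℝ) → ℝ → ℝ)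
    (huS : Smooth2 uS) (hwS : Smooth2 wS) (huT : Smooth2 uT) (hwT : Smooth2 wT)
    (hθS : Smooth2 θS)
    (hrelS : ∀ x t, pt wS x t + dsp wS x t (uS x t) - dsp uS x t (wS x t) = 0)
    (hrelT : ∀ x t, pt wT x t + dsp wT x t (uS x t) - dsp uT x t (wS x t) = 0)
    (hθ : ∀ x t, pt θS x t + dsp θS x t (uS x t) + s * uT x t = 0)
    (φ : (ℝ × ℝ) → ℝ → ℝ × ℝ) (hφ : Smooth2 φ)
    (hφ0 : ∀ X, φ X 0 = X)
    (hflow : ∀ X t, deriv (fun τ => φ X τ) t = uS (φ X t) t)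
    (hsurj : ∀ t : ℝ, Function.Surjective (fun X => φ X t))
    (hinit : ∀ x : ℝ × ℝ, dsp θS x 0 (wS x 0) + s * wT x 0 = 0) :
    ∀ (x : ℝ × ℝ) (t : ℝ), dsp θS x t (wS x t) + s * wT x t = 0 := by
  -- notation
  set D : (ℝ × ℝ) × ℝ → ((ℝ × ℝ) × ℝ) →L[ℝ] ℝ :=
    fderiv ℝ (fun p : (ℝ × ℝ) × ℝ => θS p.1 p.2) with hDdef
  have hD : ContDiff ℝ (⊤ : ℕ∞) D := hθS.fderiv_right (by simp)
  set G : (ℝ × ℝ) × ℝ → ℝ :=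
    fun p => D p ((wS p.1 p.2, 0)) + s * wT p.1 p.2 with hGdef
  -- derivative of G
  have hWt : ∀ p : (ℝ × ℝ) × ℝ,
      HasFDerivAt (fun q : (ℝ × ℝ) × ℝ => ((wS q.1 q.2, (0:ℝ)) : (ℝ × ℝ) × ℝ))
        ((fderiv ℝ (fun q : (ℝ × ℝ) × ℝ => wS q.1 q.2) p).prod 0) p :=
    fun p => ((hwS.differentiable (by simp)) p).hasFDerivAt.prodMk (hasFDerivAt_const 0 p)
  have hGd : ∀ p : (ℝ × ℝ) × ℝ,
      HasFDerivAt G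
        (((D p).comp ((fderiv ℝ (fun q : (ℝ × ℝ) × ℝ => wS q.1 q.2) p).prod 0)
            + (fderiv ℝ D p).flip ((wS p.1 p.2, 0)))
          + s • fderiv ℝ (fun q : (ℝ × ℝ) × ℝ => wT q.1 q.2) p) p := by
    intro p
    exact (HasFDerivAt.clm_apply ((hD.differentiable (by simp)) p).hasFDerivAt (hWt p)).add
      (((hwT.differentiable (by simp)) p).hasFDerivAt.const_mul s)
  -- the key pointwise identity
  have key : ∀ p : (ℝ × ℝ) × ℝ,
      (((D p).comp ((fderiv ℝ (fun q : (ℝ × ℝ) × ℝ => wS q.1 q.2) p).prod 0)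
            + (fderiv ℝ D p).flip ((wS p.1 p.2, 0)))
          + s • fderiv ℝ (fun q : (ℝ × ℝ) × ℝ => wT q.1 q.2) p) ((uS p.1 p.2, 1)) = 0 := by
    rintro ⟨y, τ⟩
    -- (1) transport of wS
    have e1 : fderiv ℝ (fun q : (ℝ × ℝ) × ℝ => wS q.1 q.2) (y, τ) ((uS y τ, 1))
        = dsp uS y τ (wS y τ) := by
      rw [aux_mat hwS]
      exact sub_eq_zero.mp (hrelS y τ)
    -- (2) transport of wT
    have e2 : fderiv ℝ (fun q : (ℝ × ℝ) × ℝ => wT q.1 q.2) (y, τ) ((uS y τ, 1))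
        = dsp uT y τ (wS y τ) := by
      rw [aux_mat hwT]
      exact sub_eq_zero.mp (hrelT y τ)
    -- (3) differentiate the θ equation in the wS direction
    have hZ0 : (fun q : (ℝ × ℝ) × ℝ => D q ((uS q.1 q.2, 1)) + s * uT q.1 q.2)
        = fun _ => (0:ℝ) := by
      funext q
      obtain ⟨z, r⟩ := q
      rw [hDdef, aux_mat hθS]
      exact hθ z r
    have hUt : HasFDerivAt (fun q : (ℝ × ℝ) × ℝ => ((uS q.1 q.2, (1:ℝ)) : (ℝ × ℝ) × ℝ))
        ((fderiv ℝ (fun q : (ℝ × ℝ) × ℝ => uS q.1 q.2) (y, τ)).prod 0) (y, τ) :=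
      ((huS.differentiable (by simp)) (y, τ)).hasFDerivAt.prodMk (hasFDerivAt_const 1 (y, τ))
    have hZhas : HasFDerivAt
        (fun q : (ℝ × ℝ) × ℝ => D q ((uS q.1 q.2, 1)) + s * uT q.1 q.2)
        (((D (y, τ)).comp ((fderiv ℝ (fun q : (ℝ × ℝ) × ℝ => uS q.1 q.2) (y, τ)).prod 0)
            + (fderiv ℝ D (y, τ)).flip ((uS y τ, 1)))
          + s • fderiv ℝ (fun q : (ℝ × ℝ) × ℝ => uT q.1 q.2) (y, τ)) (y, τ) :=
      (HasFDerivAt.clm_apply ((hD.differentiable (by simp)) (y, τ)).hasFDerivAt hUt).add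
        (((huT.differentiable (by simp)) (y, τ)).hasFDerivAt.const_mul s)
    have hZ' : (((D (y, τ)).comp
            ((fderiv ℝ (fun q : (ℝ × ℝ) × ℝ => uS q.1 q.2) (y, τ)).prod 0)
            + (fderiv ℝ D (y, τ)).flip ((uS y τ, 1)))
          + s • fderiv ℝ (fun q : (ℝ × ℝ) × ℝ => uT q.1 q.2) (y, τ)) = 0 := by
      have := hZhas.fderiv
      rw [hZ0, fderiv_const_apply] at this
      simpa using this.symm
    have e3 := congrFun (congrArg DFunLike.coe hZ') ((wS y τ, 0))
    -- auxiliary spatial derivative identities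
    have e4 : fderiv ℝ (fun q : (ℝ × ℝ) × ℝ => uS q.1 q.2) (y, τ) ((wS y τ, 0))
        = dsp uS y τ (wS y τ) := (aux_dsp huS y τ (wS y τ)).symm
    have e5 : fderiv ℝ (fun q : (ℝ × ℝ) × ℝ => uT q.1 q.2) (y, τ) ((wS y τ, 0))
        = dsp uT y τ (wS y τ) := (aux_dsp huT y τ (wS y τ)).symm
    -- symmetry of the second derivative of θ
    have esym : fderiv ℝ D (y, τ) ((uS y τ, 1)) ((wS y τ, 0))
        = fderiv ℝ D (y, τ) ((wS y τ, 0)) ((uS y τ, 1)) := by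
      exact (hθS.contDiffAt.isSymmSndFDerivAt (by rw [minSmoothness_of_isRCLikeNormedField]; exact WithTop.coe_le_coe.mpr le_top)) _ _
    simp only [ContinuousLinearMap.add_apply, ContinuousLinearMap.comp_apply,
      ContinuousLinearMap.flip_apply, ContinuousLinearMap.smul_apply,
      ContinuousLinearMap.prod_apply, ContinuousLinearMap.zero_apply,
      smul_eq_mul] at e3 ⊢
    rw [e1, e2, esym]
    rw [e4, e5] at e3
    linarith [e3]
  -- transport along the flow
  have hG0 : ∀ X t, G ((φ X t, t)) = 0 := by
    intro X t
    have hflowdiff : ∀ r : ℝ, HasDerivAt (fun τ => φ X τ) (uS (φ X r) r) r := by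
      intro r
      have hdiff : DifferentiableAt ℝ (fun τ => φ X τ) r :=
        ((hφ.differentiable (by simp)) (X, r)).comp r
          ((differentiableAt_const X).prodMk differentiableAt_id)
      rw [← hflow X r]
      exact hdiff.hasDerivAt
    have hg : ∀ r : ℝ, HasDerivAt (fun τ => G ((φ X τ, τ))) 0 r := by
      intro r
      have hc : HasDerivAt (fun τ : ℝ => ((φ X τ, τ) : (ℝ × ℝ) × ℝ)) ((uS (φ X r) r, 1)) r :=
        (hflowdiff r).prodMk (hasDerivAt_id r)
      have := (hGd ((φ X r, r))).comp_hasDerivAt_of_eq r hc rfl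
      rwa [key ((φ X r, r))] at this
    have hconst : G ((φ X t, t)) = G ((φ X 0, 0)) :=
      is_const_of_deriv_eq_zero (fun r => (hg r).differentiableAt)
        (fun r => (hg r).deriv) t 0
    rw [hconst, hφ0, hGdef]
    simp only [hDdef]
    rw [← aux_dsp hθS]
    exact hinit X
  intro x t
  obtain ⟨X, hX⟩ := hsurj t x
  have := hG0 X t
  simp only [hX] at this
  rw [hGdef] at this
  simp only [hDdef] at this
  rwa [← aux_dsp hθS] at this
end
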